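/- arXiv:1603.02500 — 16 statements merged into one kernel-verified Lean document; each statement's English description precedes it below -/
import Mathlib

section
/- Let A be a category, λ a regular cardinal, D a λ-directed poset, and D : D → A a functor taking values in monomorphisms whose colimit exists. If every object of A can be written as a colimit of a λ-directed diagram of monomorphisms between λ-generated objects (i.e. A is λ-mono-generated), then every component k_d : D(d) → colim D of the colimit cocone is a monomorphism. -/
open CategoryTheory CategoryTheory.Limits

universe v u u'

/-- A preorder `D` is `κ`-directed if every subset of cardinality `< κ` has an upper bound. -/
def IsLambdaDirected (κ : Cardinal.{v}) (D : Type v) [Preorder D] : Prop :=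
  ∀ s : Set D, Cardinal.mk s < κ → ∃ d : D, ∀ x ∈ s, x ≤ d

/-- An object `X` is `κ`-generated if `hom(X,-)` preserves those `κ`-directed colimits of
monomorphisms that exist in the category. -/
def IsLambdaGenerated {C : Type u} [Category.{v} C] (κ : Cardinal.{v}) (X : C) : Prop :=
  ∀ (D : Type v) [Preorder D], IsLambdaDirected κ D →
    ∀ (F : D ⥤ C), (∀ {d d' : D} (f : d ⟶ d'), Mono (F.map f)) →
    ∀ (c : Cocone F), IsColimit c →
      (∀ f : X ⟶ c.pt, ∃ (d : D) (g : X ⟶ F.obj d), g ≫ c.ι.app d = f) ∧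
      (∀ (d : D) (g h : X ⟶ F.obj d), g ≫ c.ι.app d = h ≫ c.ι.app d →
        ∃ (d' : D) (e : d ⟶ d'), g ≫ F.map e = h ≫ F.map e)

/-- A witness exhibiting `X` as a `κ`-directed colimit of a diagram of monomorphisms
between `κ`-generated objects. -/
structure MonoGenWitness {C : Type u} [Category.{v} C] (κ : Cardinal.{v}) (X : C) where
  D : Type v
  [instD : Preorder D]
  directed : IsLambdaDirected κ D
  F : D ⥤ C
  monoMaps : ∀ {d d' : D} (f : d ⟶ d'), Mono (F.map f)
  gen : ∀ d : D, IsLambdaGenerated κ (F.obj d)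
  cocone : Cocone F
  isColimit : IsColimit cocone
  iso : cocone.pt ≅ X

/-- A category is `κ`-mono-generated if every object is a `κ`-directed colimit of a diagram
of monomorphisms between `κ`-generated objects. -/
def LambdaMonoGenerated (κ : Cardinal.{v}) (C : Type u) [Category.{v} C] : Prop :=
  ∀ X : C, Nonempty (MonoGenWitness κ X)

/-- A span `X ↢ U ↣ Y` with both legs monomorphisms. -/
structure MonoSpan {C : Type u} [Category.{v} C] (X Y : C) where
  U : C
  l : U ⟶ X
  r : U ⟶ Y
  monoL : Mono l
  monoR : Mono r

/-- A set of spans is `κ`-dense if it is nonempty and satisfies the back and forth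
extension properties with respect to monomorphisms from `κ`-generated objects. -/
def IsLambdaDense {C : Type u} [Category.{v} C] (κ : Cardinal.{v}) {X Y : C}
    (S : Set (MonoSpan X Y)) : Prop :=
  S.Nonempty ∧
  (∀ s ∈ S, ∀ (G : C) (g : G ⟶ X), Mono g → IsLambdaGenerated κ G →
    ∃ s' ∈ S, ∃ (t : G ⟶ s'.U) (m : s.U ⟶ s'.U),
      t ≫ s'.l = g ∧ m ≫ s'.l = s.l ∧ m ≫ s'.r = s.r) ∧
  (∀ s ∈ S, ∀ (G : C) (g : G ⟶ Y), Mono g → IsLambdaGenerated κ G →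
    ∃ s' ∈ S, ∃ (t : G ⟶ s'.U) (m : s.U ⟶ s'.U),
      t ≫ s'.r = g ∧ m ≫ s'.l = s.l ∧ m ≫ s'.r = s.r)

/-- `X ∼_κ Y` : there exists a `κ`-dense set of spans between `X` and `Y`. -/
def LambdaEquiv {C : Type u} [Category.{v} C] (κ : Cardinal.{v}) (X Y : C) : Prop :=
  ∃ S : Set (MonoSpan X Y), IsLambdaDense κ S

/-- `f : X ⟶ Y` is a `κ`-embedding if some `κ`-dense set of spans witnesses it. -/
def IsLambdaEmbedding {C : Type u} [Category.{v} C] (κ : Cardinal.{v}) {X Y : C}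
    (f : X ⟶ Y) : Prop :=
  ∃ S : Set (MonoSpan X Y), IsLambdaDense κ S ∧
    ∀ (G : C) (g : G ⟶ X), Mono g → IsLambdaGenerated κ G →
      ∃ s ∈ S, ∃ t : G ⟶ s.U, t ≫ s.l = g ∧ t ≫ s.r = g ≫ f

theorem statement0 {C : Type u} [Category.{v} C] (κ : Cardinal.{v}) (hκ : κ.IsRegular)
    (hC : LambdaMonoGenerated κ C)
    (D : Type v) [Preorder D] (hD : IsLambdaDirected κ D)
    (F : D ⥤ C) (hF : ∀ {d d' : D} (f : d ⟶ d'), Mono (F.map f))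
    (c : Cocone F) (hc : IsColimit c) (d : D) :
    Mono (c.ι.app d) := by
  constructor
  intro Z g h hgh
  obtain ⟨W⟩ := hC Z
  letI := W.instD
  have hext : ∀ e, W.cocone.ι.app e ≫ W.iso.hom ≫ g = W.cocone.ι.app e ≫ W.iso.hom ≫ h := by
    intro e
    have hg := W.gen e D hD F (fun {a b} f => hF f) c hc
    obtain ⟨d', ar, heq⟩ := hg.2 d (W.cocone.ι.app e ≫ W.iso.hom ≫ g)
      (W.cocone.ι.app e ≫ W.iso.hom ≫ h)
      (by simp only [Category.assoc, hgh])
    haveI := hF ar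
    exact (cancel_mono (F.map ar)).mp heq
  have h2 : W.iso.hom ≫ g = W.iso.hom ≫ h := W.isColimit.hom_ext hext
  exact (cancel_epi W.iso.hom).mp h2
end

section
/- Let A be a λ-mono-generated category, D a λ-directed poset, and D₁, D₂ : D → A functors taking values in monomorphisms whose colimits exist. If η : D₁ → D₂ is a natural transformation such that η(d) is a monomorphism for every d ∈ D, then the induced map m : colim D₁ → colim D₂ is a monomorphism. -/
open CategoryTheory CategoryTheory.Limits

universe v u u'

theorem statement1 {C : Type u} [Category.{v} C] (κ : Cardinal.{v}) (hκ : κ.IsRegular)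
    (hC : LambdaMonoGenerated κ C)
    (D : Type v) [Preorder D] (hD : IsLambdaDirected κ D)
    (F₁ F₂ : D ⥤ C)
    (hF₁ : ∀ {d d' : D} (f : d ⟶ d'), Mono (F₁.map f))
    (hF₂ : ∀ {d d' : D} (f : d ⟶ d'), Mono (F₂.map f))
    (c₁ : Cocone F₁) (hc₁ : IsColimit c₁)
    (c₂ : Cocone F₂) (hc₂ : IsColimit c₂)
    (η : F₁ ⟶ F₂) (hη : ∀ d : D, Mono (η.app d)) :
    Mono (hc₁.map c₂ η) := by
  have key : ∀ (G : C), IsLambdaGenerated κ G → ∀ (gg hh : G ⟶ c₁.pt),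
      gg ≫ hc₁.map c₂ η = hh ≫ hc₁.map c₂ η → gg = hh := by
    intro G hG gg hh hghh
    obtain ⟨hfac, _⟩ := hG D hD F₁ hF₁ c₁ hc₁
    obtain ⟨d₁, g₁, hg₁⟩ := hfac gg
    obtain ⟨d₂, h₁, hh₁⟩ := hfac hh
    obtain ⟨d, hd⟩ := hD {d₁, d₂}
      ((Set.toFinite _).lt_aleph0.trans_le hκ.aleph0_le)
    have e₁ : d₁ ⟶ d := homOfLE (hd d₁ (by simp))
    have e₂ : d₂ ⟶ d := homOfLE (hd d₂ (by simp))
    set g₂ := g₁ ≫ F₁.map e₁ with hg₂def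
    set h₂ := h₁ ≫ F₁.map e₂ with hh₂def
    have hg₂ : g₂ ≫ c₁.ι.app d = gg := by
      rw [hg₂def, Category.assoc, c₁.w e₁, hg₁]
    have hh₂ : h₂ ≫ c₁.ι.app d = hh := by
      rw [hh₂def, Category.assoc, c₁.w e₂, hh₁]
    have hGc₂ := (hG D hD F₂ hF₂ c₂ hc₂).2
    have hcomp : (g₂ ≫ η.app d) ≫ c₂.ι.app d = (h₂ ≫ η.app d) ≫ c₂.ι.app d := by
      have h' := hghh
      rw [← hg₂, ← hh₂] at h'
      simpa only [Category.assoc, IsColimit.ι_map] using h'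
    obtain ⟨d', e, he⟩ := hGc₂ d (g₂ ≫ η.app d) (h₂ ≫ η.app d) hcomp
    have hnat := η.naturality e
    have key2 : g₂ ≫ F₁.map e ≫ η.app d' = h₂ ≫ F₁.map e ≫ η.app d' := by
      rw [hnat]
      simpa [Category.assoc] using he
    haveI := hη d'
    have hge : g₂ ≫ F₁.map e = h₂ ≫ F₁.map e := by
      rw [← cancel_mono (η.app d')]
      simpa [Category.assoc] using key2
    rw [← hg₂, ← hh₂, ← c₁.w e, ← Category.assoc, ← Category.assoc, hge]
  constructor
  intro Z g h hgh
  obtain ⟨W⟩ := hC Z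
  letI := W.instD
  have hiso : W.iso.hom ≫ g = W.iso.hom ≫ h := by
    apply W.isColimit.hom_ext
    intro i
    have := key (W.F.obj i) (W.gen i) (W.cocone.ι.app i ≫ W.iso.hom ≫ g)
      (W.cocone.ι.app i ≫ W.iso.hom ≫ h) (by simp only [Category.assoc, hgh])
    simpa [Category.assoc] using this
  exact (cancel_epi W.iso.hom).mp hiso
end

section
/- Let A be a λ-mono-generated category, D a λ-directed poset, and D : D → A a functor taking values in monomorphisms whose colimit exists. If E is the vertex of a cocone on D all of whose components are monomorphisms, then the induced map colim D → E is a monomorphism. -/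
open CategoryTheory CategoryTheory.Limits

universe v u u'

theorem statement2 {C : Type u} [Category.{v} C] (κ : Cardinal.{v}) (hκ : κ.IsRegular)
    (hC : LambdaMonoGenerated κ C)
    (D : Type v) [Preorder D] (hD : IsLambdaDirected κ D)
    (F : D ⥤ C) (hF : ∀ {d d' : D} (f : d ⟶ d'), Mono (F.map f))
    (c : Cocone F) (hc : IsColimit c)
    (c' : Cocone F) (hc' : ∀ d : D, Mono (c'.ι.app d)) :
    Mono (hc.desc c') := by
  -- key step: cancellation for κ-generated sources
  have key : ∀ (G : C), IsLambdaGenerated κ G → ∀ (g h : G ⟶ c.pt),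
      g ≫ hc.desc c' = h ≫ hc.desc c' → g = h := by
    intro G hG g h hgh
    obtain ⟨hfac, -⟩ := hG D hD F hF c hc
    obtain ⟨d₁, g₁, hg₁⟩ := hfac g
    obtain ⟨d₂, h₂, hh₂⟩ := hfac h
    obtain ⟨d, hd⟩ := hD {d₁, d₂} (lt_of_lt_of_le
      (((Set.finite_singleton d₂).insert d₁).lt_aleph0) hκ.aleph0_le)
    have le₁ : d₁ ≤ d := hd d₁ (by simp)
    have le₂ : d₂ ≤ d := hd d₂ (by simp)
    have hg : g = (g₁ ≫ F.map (homOfLE le₁)) ≫ c.ι.app d := by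
      rw [Category.assoc, c.w (homOfLE le₁), hg₁]
    have hh : h = (h₂ ≫ F.map (homOfLE le₂)) ≫ c.ι.app d := by
      rw [Category.assoc, c.w (homOfLE le₂), hh₂]
    have hfd : c.ι.app d ≫ hc.desc c' = c'.ι.app d := hc.fac c' d
    have : (g₁ ≫ F.map (homOfLE le₁)) ≫ c'.ι.app d
        = (h₂ ≫ F.map (homOfLE le₂)) ≫ c'.ι.app d := by
      rw [← hfd, ← Category.assoc, ← Category.assoc, ← hg, ← hh]
      exact hgh
    have := (hc' d).right_cancellation _ _ this
    rw [hg, hh, this]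
  constructor
  intro Z g h hgh
  obtain ⟨W⟩ := hC Z
  letI := W.instD
  have : W.iso.hom ≫ g = W.iso.hom ≫ h := by
    apply W.isColimit.hom_ext
    intro d
    have := key (W.F.obj d) (W.gen d)
      (W.cocone.ι.app d ≫ W.iso.hom ≫ g) (W.cocone.ι.app d ≫ W.iso.hom ≫ h)
    simp only [Category.assoc] at this ⊢
    exact this (by rw [hgh])
  exact (cancel_epi W.iso.hom).mp this
end

section
/- In the category of sets with injective functions as morphisms, two sets X and Y are λ-equivalent (i.e. there exists a λ-dense set of spans between X and Y) if and only if either |X| = |Y| < λ, or both |X| ≥ λ and |Y| ≥ λ, where λ is an infinite regular cardinal. -/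
open CategoryTheory CategoryTheory.Limits

universe v u u'

/-- The wide subcategory of `C` with the same objects and the monomorphisms as morphisms. -/
def MonoCat (C : Type u) [Category.{v} C] : Type u := C

instance monoCatCategory (C : Type u) [Category.{v} C] : Category.{v} (MonoCat C) where
  Hom X Y := {f : (show C from X) ⟶ (show C from Y) // Mono f}
  id X := ⟨𝟙 _, inferInstance⟩
  comp f g := ⟨f.1 ≫ g.1, by haveI := f.2; haveI := g.2; exact mono_comp _ _⟩
  id_comp f := Subtype.ext (Category.id_comp f.1)
  comp_id f := Subtype.ext (Category.comp_id f.1)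
  assoc f g h := Subtype.ext (Category.assoc f.1 g.1 h.1)

/-- The inclusion functor `A_mono → A`. -/
def monoIncl (C : Type u) [Category.{v} C] : MonoCat C ⥤ C where
  obj X := X
  map f := f.1
  map_id _ := rfl
  map_comp _ _ := rfl

/-- View an object of `C` as an object of `MonoCat C`. -/
def toMono {C : Type u} [Category.{v} C] (X : C) : MonoCat C := X

namespace Statement4Aux
open Cardinal Function Set

lemma hom_injective {X Y : MonoCat (Type v)} (f : X ⟶ Y) : Function.Injective f.1 :=
  (CategoryTheory.mono_iff_injective f.1).mp f.2

lemma val_congr {X Y : MonoCat (Type v)} {f g : X ⟶ Y} (h : f = g)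
    (x : (show Type v from X)) : f.1 x = g.1 x := by rw [h]

def mkHom {X Y : MonoCat (Type v)} (f : (show Type v from X) → (show Type v from Y))
    (hf : Function.Injective f) : X ⟶ Y :=
  ⟨TypeCat.ofHom f, (CategoryTheory.ofHom_mono_iff_injective f).mpr hf⟩

lemma allMono {X Y : MonoCat (Type v)} (f : X ⟶ Y) : Mono f := by
  constructor
  intro Z g h e
  apply Subtype.ext
  refine ConcreteCategory.hom_ext _ _ fun x => ?_
  exact hom_injective f (val_congr e x)

lemma comp_val {X Y Z : MonoCat (Type v)} (f : X ⟶ Y) (g : Y ⟶ Z)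
    (x : (show Type v from X)) : (f ≫ g).1 x = g.1 (f.1 x) := rfl

end Statement4Aux
namespace Statement4Aux

lemma gen_of_small {κ : Cardinal.{v}} (hκ : κ.IsRegular) (G : MonoCat (Type v))
    (hG : Cardinal.mk (show Type v from G) < κ) : IsLambdaGenerated κ G := by
  intro D _ hD F hF c hc
  classical
  -- the legs of the colimit cocone are jointly surjective
  have hsurj : ∀ x : (show Type v from c.pt), ∃ d : D, x ∈ Set.range (c.ι.app d).1 := by
    intro x
    set P : Set (show Type v from c.pt) := ⋃ d : D, Set.range (c.ι.app d).1 with hP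
    let c' : Cocone F :=
      { pt := toMono ↥P
        ι :=
          { app := fun d => mkHom
              (fun y => (⟨(c.ι.app d).1 y, Set.mem_iUnion.mpr ⟨d, ⟨y, rfl⟩⟩⟩ : ↥P))
              (fun a b h => hom_injective (c.ι.app d) (congrArg Subtype.val h))
            naturality := fun d d' f => by
              apply Subtype.ext
              refine ConcreteCategory.hom_ext _ _ fun y => ?_
              apply Subtype.ext
              show (c.ι.app d').1 ((F.map f).1 y) = (c.ι.app d).1 y
              rw [← comp_val, c.w f] } }
    let φ := hc.desc c'
    let inc : (toMono ↥P : MonoCat (Type v)) ⟶ c.pt := mkHom Subtype.val Subtype.val_injective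
    have hretr : φ ≫ inc = 𝟙 c.pt := by
      apply hc.hom_ext
      intro d
      simp only [Category.comp_id, ← Category.assoc, hc.fac c' d]
      apply Subtype.ext; refine ConcreteCategory.hom_ext _ _ fun y => ?_
      exact congrArg Subtype.val (val_congr (hc.fac c' d) y)
    have : Subtype.val (φ.1 x) = x := val_congr hretr x
    have hx : x ∈ P := this ▸ (φ.1 x).2
    exact Set.mem_iUnion.mp hx
  refine ⟨?_, ?_⟩
  · intro f
    choose dd hdd using fun x => hsurj (f.1 x)
    obtain ⟨d₀, hd₀⟩ := hD (Set.range dd) (lt_of_le_of_lt Cardinal.mk_range_le hG)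
    have key : ∀ x : (show Type v from G), ∃ u : (show Type v from F.obj d₀),
        (c.ι.app d₀).1 u = f.1 x := by
      intro x
      obtain ⟨u, hu⟩ := hdd x
      refine ⟨(F.map (homOfLE (hd₀ _ (Set.mem_range_self x)))).1 u, ?_⟩
      rw [← comp_val, c.w]
      exact hu
    choose g0 hg0 using key
    have hg0inj : Function.Injective g0 := fun a b h =>
      hom_injective f (by rw [← hg0 a, ← hg0 b, h])
    exact ⟨d₀, mkHom g0 hg0inj, Subtype.ext (ConcreteCategory.hom_ext _ _ hg0)⟩
  · intro d g h he
    refine ⟨d, 𝟙 d, ?_⟩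
    have : g = h := by
      apply Subtype.ext
      refine ConcreteCategory.hom_ext _ _ fun x => ?_
      exact hom_injective (c.ι.app d) (val_congr he x)
    rw [this]

end Statement4Aux
namespace Statement4Aux

lemma small_of_gen {κ : Cardinal.{v}} (hκ : κ.IsRegular) (G : MonoCat (Type v))
    (hG : IsLambdaGenerated κ G) : Cardinal.mk (show Type v from G) < κ := by
  classical
  let Gt := (show Type v from G)
  let D := {A : Set Gt // Cardinal.mk A < κ}
  have singmem : ∀ x : Gt, Cardinal.mk (({x} : Set Gt)) < κ := by
    intro x
    rw [Cardinal.mk_singleton]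
    exact lt_of_lt_of_le Cardinal.one_lt_aleph0 hκ.aleph0_le
  let sing : Gt → D := fun x => ⟨{x}, singmem x⟩
  have hdir : IsLambdaDirected κ D := by
    intro s hs
    refine ⟨⟨⋃ A : s, (A.1.1 : Set Gt), ?_⟩, ?_⟩
    · exact lt_of_le_of_lt Cardinal.mk_iUnion_le_sum_mk
        (Cardinal.sum_lt_of_isRegular hκ hs fun A => A.1.2)
    · intro A hA
      exact Set.subset_iUnion (fun B : s => (B.1.1 : Set Gt)) ⟨A, hA⟩
  let F : D ⥤ MonoCat (Type v) :=
    { obj := fun A => toMono ↥A.1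
      map := fun {A B} f => mkHom (Set.inclusion f.le) (Set.inclusion_injective f.le)
      map_id := fun A => rfl
      map_comp := fun f g => by
        apply Subtype.ext; exact ConcreteCategory.hom_ext _ _ fun x => rfl }
  let cone : Cocone F :=
    { pt := G
      ι :=
        { app := fun A => mkHom (fun x => (x.1 : Gt)) Subtype.val_injective
          naturality := fun A B f => by
            apply Subtype.ext; exact ConcreteCategory.hom_ext _ _ fun x => rfl } }
  have key : ∀ (c' : Cocone F) (A : D) (x : Gt) (hx : x ∈ A.1),
      (c'.ι.app (sing x)).1 ⟨x, rfl⟩ = (c'.ι.app A).1 ⟨x, hx⟩ := by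
    intro c' A x hx
    have hle : sing x ≤ A := by
      intro y hy
      rw [Set.mem_singleton_iff.mp hy]
      exact hx
    have := c'.w (homOfLE hle)
    calc (c'.ι.app (sing x)).1 ⟨x, rfl⟩
        = (F.map (homOfLE hle) ≫ c'.ι.app A).1 ⟨x, rfl⟩ := by rw [this]
      _ = (c'.ι.app A).1 ⟨x, hx⟩ := rfl
  let desc : ∀ c' : Cocone F, cone.pt ⟶ c'.pt := fun c' =>
    mkHom (fun x => (c'.ι.app (sing x)).1 ⟨x, rfl⟩) (by
      intro a b hab
      have hpair : Cardinal.mk (({a, b} : Set Gt)) < κ := by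
        refine lt_of_le_of_lt ?_ (lt_of_lt_of_le (Cardinal.add_lt_aleph0
          Cardinal.one_lt_aleph0 Cardinal.one_lt_aleph0) hκ.aleph0_le)
        have : ({a, b} : Set Gt) = {a} ∪ {b} := Set.insert_eq a {b}
        rw [this]
        exact le_trans (Cardinal.mk_union_le _ _)
          (by rw [Cardinal.mk_singleton, Cardinal.mk_singleton])
      have ha := key c' ⟨{a, b}, hpair⟩ a (by simp)
      have hb := key c' ⟨{a, b}, hpair⟩ b (by simp)
      have hab' : (c'.ι.app (sing a)).1 ⟨a, rfl⟩ = (c'.ι.app (sing b)).1 ⟨b, rfl⟩ := hab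
      rw [ha, hb] at hab'
      have := hom_injective (c'.ι.app ⟨{a, b}, hpair⟩) hab'
      exact congrArg Subtype.val this)
  have hfac : ∀ (c' : Cocone F) (A : D), cone.ι.app A ≫ desc c' = c'.ι.app A := by
    intro c' A
    apply Subtype.ext
    refine ConcreteCategory.hom_ext _ _ fun x => ?_
    exact key c' A x.1 x.2
  let hcolim : IsColimit cone :=
    { desc := desc
      fac := hfac
      uniq := fun c' m hm => by
        apply Subtype.ext
        refine ConcreteCategory.hom_ext _ _ fun x => ?_
        exact val_congr (hm (sing x)) ⟨x, rfl⟩ }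
  obtain ⟨h1, -⟩ := hG D hdir F (fun f => allMono _) cone hcolim
  obtain ⟨A, g, -⟩ := h1 (𝟙 G)
  exact lt_of_le_of_lt (Cardinal.mk_le_of_injective (hom_injective g)) A.2

end Statement4Aux
namespace Statement4Aux
open Function

lemma exists_extension {κ : Cardinal.{v}} (hκ : κ.IsRegular) {X Y : Type v}
    (hY : κ ≤ Cardinal.mk Y)
    {U : Type v} {l : U → X} {r : U → Y} (hl : Injective l) (hr : Injective r)
    (hU : Cardinal.mk U < κ)
    {G : Type v} {g : G → X} (hG : Cardinal.mk G < κ) :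
    ∃ (U' : Type v) (l' : U' → X) (r' : U' → Y),
      Injective l' ∧ Injective r' ∧ Cardinal.mk U' < κ ∧
      ∃ (t : G → U') (m : U → U'), l' ∘ t = g ∧ l' ∘ m = l ∧ r' ∘ m = r := by
  classical
  set A : Set X := Set.range l with hA
  set C : Set X := Set.range g with hC
  set B : Set Y := Set.range r with hB
  -- the complement of B is large
  have hBc : Cardinal.mk (↥(Bᶜ)) ≥ κ := by
    by_contra hcon
    push_neg at hcon
    have hBlt : Cardinal.mk (↥B) < κ := lt_of_le_of_lt Cardinal.mk_range_le hU
    have : Cardinal.mk Y < κ := by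
      rw [← Cardinal.mk_sum_compl B]
      exact Cardinal.add_lt_of_lt hκ.aleph0_le hBlt hcon
    exact absurd hY (not_le.mpr this)
  set W := ↥(A ∪ C) with hW
  have hWlt : Cardinal.mk W < κ := by
    refine lt_of_le_of_lt (Cardinal.mk_union_le A C) ?_
    exact Cardinal.add_lt_of_lt hκ.aleph0_le
      (lt_of_le_of_lt Cardinal.mk_range_le hU)
      (lt_of_le_of_lt Cardinal.mk_range_le hG)
  -- injection from the new part into the complement of B
  have hsub : Cardinal.mk {x : W // x.1 ∉ A} ≤ Cardinal.mk (↥(Bᶜ)) :=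
    le_trans (le_of_lt (lt_of_le_of_lt (Cardinal.mk_le_of_injective
      (Subtype.val_injective (p := fun x : W => x.1 ∉ A))) hWlt)) hBc
  obtain ⟨j⟩ := Cardinal.le_def _ _ |>.mp hsub
  -- define r'
  let r' : W → Y := fun x =>
    if h : x.1 ∈ A then r h.choose else (j ⟨x, h⟩).1
  have hr'A : ∀ (u : U), r' ⟨l u, Or.inl ⟨u, rfl⟩⟩ = r u := by
    intro u
    have h : (l u : X) ∈ A := ⟨u, rfl⟩
    simp only [r', dif_pos h]
    congr 1
    exact hl h.choose_spec
  have hr'mem : ∀ (x : W) (h : x.1 ∈ A), r' x ∈ B := by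
    intro x h
    simp only [r', dif_pos h]
    exact ⟨h.choose, rfl⟩
  have hr'nmem : ∀ (x : W) (h : x.1 ∉ A), r' x ∈ Bᶜ := by
    intro x h
    simp only [r', dif_neg h]
    exact (j ⟨x, h⟩).2
  have hr'inj : Injective r' := by
    intro a b hab
    by_cases ha : a.1 ∈ A <;> by_cases hb : b.1 ∈ A
    · have : r ha.choose = r hb.choose := by
        simpa only [r', dif_pos ha, dif_pos hb] using hab
      have heq := hr this
      apply Subtype.ext
      rw [← ha.choose_spec, ← hb.choose_spec, heq]
    · exact absurd (hab ▸ hr'mem a ha) (hr'nmem b hb)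
    · exact absurd (hab ▸ hr'nmem a ha) (fun hc => hc (hr'mem b hb))
    · have : j ⟨a, ha⟩ = j ⟨b, hb⟩ := Subtype.ext (by
        simpa only [r', dif_neg ha, dif_neg hb] using hab)
      have := j.injective this
      exact Subtype.ext (congrArg Subtype.val (congrArg Subtype.val this))
  refine ⟨W, Subtype.val, r', Subtype.val_injective, hr'inj, hWlt,
    fun x => ⟨g x, Or.inr ⟨x, rfl⟩⟩, fun u => ⟨l u, Or.inl ⟨u, rfl⟩⟩, rfl, rfl, ?_⟩
  funext u
  exact hr'A u

end Statement4Aux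
namespace Statement4Aux
open Function

lemma lambdaEquiv_of_large {κ : Cardinal.{v}} (hκ : κ.IsRegular) (X Y : MonoCat (Type v))
    (hX : κ ≤ Cardinal.mk (show Type v from X)) (hY : κ ≤ Cardinal.mk (show Type v from Y)) :
    LambdaEquiv κ X Y := by
  refine ⟨{s : MonoSpan X Y | Cardinal.mk (show Type v from s.U) < κ}, ?_, ?_, ?_⟩
  · refine ⟨⟨toMono (PEmpty.{v+1}), mkHom (fun x => x.elim) (fun a => a.elim),
      mkHom (fun x => x.elim) (fun a => a.elim), allMono _, allMono _⟩, ?_⟩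
    show Cardinal.mk PEmpty < κ
    rw [Cardinal.mk_eq_zero]
    exact lt_of_lt_of_le Cardinal.aleph0_pos hκ.aleph0_le
  · intro s hs G g _ hgen
    have hG := small_of_gen hκ G hgen
    obtain ⟨U', l', r', hl', hr', hU', t, m, h1, h2, h3⟩ :=
      exists_extension hκ hY (hom_injective s.l) (hom_injective s.r) hs
      (g := g.1) hG
    refine ⟨⟨toMono U', mkHom l' hl', mkHom r' hr', allMono _, allMono _⟩, hU',
      mkHom t (fun a b hab => hom_injective g
        ((congrFun h1 a).symm.trans ((congrArg l' hab).trans (congrFun h1 b)))),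
      mkHom m (fun a b hab => hom_injective s.l
        ((congrFun h2 a).symm.trans ((congrArg l' hab).trans (congrFun h2 b)))),
      Subtype.ext (ConcreteCategory.hom_ext _ _ (congrFun h1)),
        Subtype.ext (ConcreteCategory.hom_ext _ _ (congrFun h2)),
        Subtype.ext (ConcreteCategory.hom_ext _ _ (congrFun h3))⟩
  · intro s hs G g _ hgen
    have hG := small_of_gen hκ G hgen
    obtain ⟨U', l', r', hl', hr', hU', t, m, h1, h2, h3⟩ :=
      exists_extension hκ hX (hom_injective s.r) (hom_injective s.l) hs
      (g := g.1) hG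
    refine ⟨⟨toMono U', mkHom r' hr', mkHom l' hl', allMono _, allMono _⟩, hU',
      mkHom t (fun a b hab => hom_injective g
        ((congrFun h1 a).symm.trans ((congrArg l' hab).trans (congrFun h1 b)))),
      mkHom m (fun a b hab => hom_injective s.r
        ((congrFun h2 a).symm.trans ((congrArg l' hab).trans (congrFun h2 b)))),
      Subtype.ext (ConcreteCategory.hom_ext _ _ (congrFun h1)),
        Subtype.ext (ConcreteCategory.hom_ext _ _ (congrFun h3)),
        Subtype.ext (ConcreteCategory.hom_ext _ _ (congrFun h2))⟩

lemma lambdaEquiv_of_small_eq {κ : Cardinal.{v}} (hκ : κ.IsRegular) (X Y : MonoCat (Type v))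
    (hXY : Cardinal.mk (show Type v from X) = Cardinal.mk (show Type v from Y))
    (hX : Cardinal.mk (show Type v from X) < κ) : LambdaEquiv κ X Y := by
  obtain ⟨e⟩ := Cardinal.eq.mp hXY
  let s₀ : MonoSpan X Y := ⟨X, 𝟙 X, mkHom e e.injective, allMono _, allMono _⟩
  refine ⟨{s₀}, ⟨s₀, rfl⟩, ?_, ?_⟩
  · intro s hs G g _ _
    rw [Set.mem_singleton_iff] at hs
    subst hs
    refine ⟨s₀, rfl, g, 𝟙 _, ?_, ?_, ?_⟩
    · exact Category.comp_id g
    · exact Category.id_comp _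
    · exact Category.id_comp _
  · intro s hs G g _ _
    rw [Set.mem_singleton_iff] at hs
    subst hs
    refine ⟨s₀, rfl, mkHom (fun x => e.symm (g.1 x))
        (fun a b hab => hom_injective g (by
          rw [← e.apply_symm_apply (g.1 a), ← e.apply_symm_apply (g.1 b)]
          exact congrArg e hab)),
      𝟙 _, ?_, ?_, ?_⟩
    · apply Subtype.ext
      refine ConcreteCategory.hom_ext _ _ fun x => ?_
      exact e.apply_symm_apply (g.1 x)
    · exact Category.id_comp _
    · exact Category.id_comp _

end Statement4Aux
namespace Statement4Aux
open Function

def spanFlip {C : Type u} [Category.{v} C] {X Y : C} (s : MonoSpan X Y) : MonoSpan Y X :=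
  ⟨s.U, s.r, s.l, s.monoR, s.monoL⟩

lemma lambdaEquiv_symm {κ : Cardinal.{v}} {C : Type u} [Category.{v} C] {X Y : C}
    (h : LambdaEquiv κ X Y) : LambdaEquiv κ Y X := by
  obtain ⟨S, ⟨s₀, hs₀⟩, hb, hf⟩ := h
  refine ⟨spanFlip '' S, ⟨spanFlip s₀, ⟨s₀, hs₀, rfl⟩⟩, ?_, ?_⟩
  · rintro s ⟨s₁, hs₁, rfl⟩ G g hg hgen
    obtain ⟨s', hs', t, m, h1, h2, h3⟩ := hf s₁ hs₁ G g hg hgen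
    exact ⟨spanFlip s', ⟨s', hs', rfl⟩, t, m, h1, h3, h2⟩
  · rintro s ⟨s₁, hs₁, rfl⟩ G g hg hgen
    obtain ⟨s', hs', t, m, h1, h2, h3⟩ := hb s₁ hs₁ G g hg hgen
    exact ⟨spanFlip s', ⟨s', hs', rfl⟩, t, m, h1, h3, h2⟩

lemma eq_of_small {κ : Cardinal.{v}} (hκ : κ.IsRegular) (X Y : MonoCat (Type v))
    (h : LambdaEquiv κ X Y) (hX : Cardinal.mk (show Type v from X) < κ) :
    Cardinal.mk (show Type v from X) = Cardinal.mk (show Type v from Y) ∧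
      Cardinal.mk (show Type v from Y) < κ := by
  obtain ⟨S, ⟨s₀, hs₀⟩, hb, hf⟩ := h
  obtain ⟨s', hs', t, m, ht, -, -⟩ := hb s₀ hs₀ X (𝟙 X) (allMono _) (gen_of_small hκ X hX)
  have hlinj := hom_injective s'.l
  have hlsurj : Function.Surjective s'.l.1 := fun x =>
    ⟨t.1 x, val_congr ht x⟩
  have hrsurj : Function.Surjective s'.r.1 := by
    intro y
    by_contra hy
    -- use the forth property with the singleton {y}
    have h1 : Cardinal.mk (↥({y} : Set (show Type v from Y))) < κ := by
      rw [Cardinal.mk_singleton]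
      exact lt_of_lt_of_le Cardinal.one_lt_aleph0 hκ.aleph0_le
    obtain ⟨s'', hs'', t', m', ht', hml, hmr⟩ := hf s' hs'
      (toMono (↥({y} : Set (show Type v from Y)))) (mkHom Subtype.val Subtype.val_injective)
      (allMono _) (gen_of_small hκ _ h1)
    -- m' is surjective
    have hm'surj : Function.Surjective m'.1 := by
      intro u''
      obtain ⟨u, hu⟩ := hlsurj (s''.l.1 u'')
      refine ⟨u, hom_injective s''.l ?_⟩
      have : s''.l.1 (m'.1 u) = s'.l.1 u := val_congr hml u
      rw [this, hu]
    obtain ⟨u, hu⟩ := hm'surj (t'.1 ⟨y, rfl⟩)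
    apply hy
    refine ⟨u, ?_⟩
    have e1 : s''.r.1 (m'.1 u) = s'.r.1 u := val_congr hmr u
    have e2 : s''.r.1 (t'.1 ⟨y, rfl⟩) = y := val_congr ht' ⟨y, rfl⟩
    rw [← e1, hu, e2]
  have e1 : Cardinal.mk (show Type v from s'.U) = Cardinal.mk (show Type v from X) :=
    Cardinal.mk_congr (Equiv.ofBijective s'.l.1 ⟨hlinj, hlsurj⟩)
  have e2 : Cardinal.mk (show Type v from s'.U) = Cardinal.mk (show Type v from Y) :=
    Cardinal.mk_congr (Equiv.ofBijective s'.r.1 ⟨hom_injective s'.r, hrsurj⟩)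
  exact ⟨e1.symm.trans e2, (e1.symm.trans e2) ▸ hX⟩

end Statement4Aux

theorem statement4 (κ : Cardinal.{v}) (hκ : κ.IsRegular) (X Y : MonoCat (Type v)) :
    LambdaEquiv κ X Y ↔
      ((Cardinal.mk (show Type v from X) = Cardinal.mk (show Type v from Y) ∧
          Cardinal.mk (show Type v from X) < κ) ∨
        (κ ≤ Cardinal.mk (show Type v from X) ∧ κ ≤ Cardinal.mk (show Type v from Y))) := by
  constructor
  · intro h
    by_cases hX : Cardinal.mk (show Type v from X) < κ
    · exact Or.inl ⟨(Statement4Aux.eq_of_small hκ X Y h hX).1, hX⟩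
    · by_cases hY : Cardinal.mk (show Type v from Y) < κ
      · obtain ⟨h1, h2⟩ :=
          Statement4Aux.eq_of_small hκ Y X (Statement4Aux.lambdaEquiv_symm h) hY
        exact Or.inl ⟨h1.symm, h2⟩
      · exact Or.inr ⟨not_lt.mp hX, not_lt.mp hY⟩
  · rintro (⟨h1, h2⟩ | ⟨h1, h2⟩)
    · exact Statement4Aux.lambdaEquiv_of_small_eq hκ X Y h1 h2
    · exact Statement4Aux.lambdaEquiv_of_large hκ X Y h1 h2
end

section
/- Let A be a λ-mono-generated category. Then X ∼_λ Y if and only if there exists a λ-dense set of λ-spans between X and Y, where a λ-span is a span whose center object is λ-generated. -/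
open CategoryTheory CategoryTheory.Limits

universe v u u'

/-- Restrict a mono-span along a monomorphism into its center. -/
def MonoSpan.restrict {C : Type u} [Category.{v} C] {X Y : C} (s : MonoSpan X Y)
    {W : C} (u : W ⟶ s.U) (hu : Mono u) : MonoSpan X Y :=
  ⟨W, u ≫ s.l, u ≫ s.r,
    by haveI := hu; haveI := s.monoL; infer_instance,
    by haveI := hu; haveI := s.monoR; infer_instance⟩

/-- In a `κ`-mono-generated category, the legs of a `κ`-directed colimit of monomorphisms
are themselves monomorphisms. -/
lemma mono_leg_of_lambdaMonoGenerated {C : Type u} [Category.{v} C] {κ : Cardinal.{v}}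
    (hC : LambdaMonoGenerated κ C) {D : Type v} [Preorder D] (hdir : IsLambdaDirected κ D)
    (F : D ⥤ C) (hmono : ∀ {d d' : D} (f : d ⟶ d'), Mono (F.map f))
    (c : Cocone F) (hc : IsColimit c) (d : D) : Mono (c.ι.app d) := by
  constructor
  intro Z g h eq
  obtain ⟨w⟩ := hC Z
  letI := w.instD
  have key : ∀ e : w.D, (w.cocone.ι.app e ≫ w.iso.hom) ≫ g =
      (w.cocone.ι.app e ≫ w.iso.hom) ≫ h := by
    intro e
    obtain ⟨d', e', he'⟩ := (w.gen e D hdir F (fun f => hmono f) c hc).2 d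
      ((w.cocone.ι.app e ≫ w.iso.hom) ≫ g) ((w.cocone.ι.app e ≫ w.iso.hom) ≫ h)
      (by simp only [Category.assoc, eq])
    haveI := hmono e'
    exact (cancel_mono (F.map e')).mp he'
  have : w.iso.hom ≫ g = w.iso.hom ≫ h := by
    apply w.isColimit.hom_ext
    intro e
    simpa only [Category.assoc] using key e
  exact (cancel_epi w.iso.hom).mp this

theorem statement6 {C : Type u} [Category.{v} C] (κ : Cardinal.{v}) (hκ : κ.IsRegular)
    (hC : LambdaMonoGenerated κ C) (X Y : C) :
    LambdaEquiv κ X Y ↔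
      ∃ S : Set (MonoSpan X Y), IsLambdaDense κ S ∧ ∀ s ∈ S, IsLambdaGenerated κ s.U := by
  constructor
  · rintro ⟨S, hne, hl, hr⟩
    -- The set of λ-spans which admit a mono into some span of S.
    set S' : Set (MonoSpan X Y) := {s' | IsLambdaGenerated κ s'.U ∧ ∃ s ∈ S,
      ∃ m : s'.U ⟶ s.U, Mono m ∧ m ≫ s.l = s'.l ∧ m ≫ s.r = s'.r} with hS'
    -- helper: restriction of a span along a mono from a λ-generated object lands in S'
    have mem_S' : ∀ s ∈ S, ∀ (W : C) (u : W ⟶ s.U) (hu : Mono u), IsLambdaGenerated κ W →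
        s.restrict u hu ∈ S' := by
      intro s hs W u hu hW
      exact ⟨hW, s, hs, u, hu, rfl, rfl⟩
    -- helper: given s ∈ S, a λ-generated G with t : G ⟶ s.U, and an arbitrary
    -- λ-generated V with map m : V ⟶ s.U, find a λ-span through which both factor.
    have factor : ∀ s ∈ S, ∀ (G : C), IsLambdaGenerated κ G → ∀ (t : G ⟶ s.U),
        ∀ (V : C), IsLambdaGenerated κ V → ∀ (m : V ⟶ s.U),
        ∃ (W : C) (u : W ⟶ s.U), Mono u ∧ IsLambdaGenerated κ W ∧
          ∃ (t' : G ⟶ W) (m' : V ⟶ W), t' ≫ u = t ∧ m' ≫ u = m := by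
      intro s hs G hG t V hV m
      obtain ⟨w⟩ := hC s.U
      letI := w.instD
      have legmono : ∀ d : w.D, Mono (w.cocone.ι.app d ≫ w.iso.hom) := fun d => by
        haveI := mono_leg_of_lambdaMonoGenerated hC w.directed w.F
          (fun f => w.monoMaps f) w.cocone w.isColimit d
        infer_instance
      obtain ⟨d₁, g₁, hg₁⟩ := (hG w.D w.directed w.F (fun f => w.monoMaps f)
        w.cocone w.isColimit).1 (t ≫ w.iso.inv)
      obtain ⟨d₂, g₂, hg₂⟩ := (hV w.D w.directed w.F (fun f => w.monoMaps f)
        w.cocone w.isColimit).1 (m ≫ w.iso.inv)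
      obtain ⟨d, hd⟩ := w.directed {d₁, d₂}
        (lt_of_lt_of_le (Set.Finite.lt_aleph0
          ((Set.finite_singleton d₂).insert d₁)) hκ.aleph0_le)
      have hd₁ : d₁ ≤ d := hd d₁ (Set.mem_insert _ _)
      have hd₂ : d₂ ≤ d := hd d₂ (Set.mem_insert_of_mem _ rfl)
      refine ⟨w.F.obj d, w.cocone.ι.app d ≫ w.iso.hom, legmono d, w.gen d,
        g₁ ≫ w.F.map (homOfLE hd₁), g₂ ≫ w.F.map (homOfLE hd₂), ?_, ?_⟩
      · have := w.cocone.w (homOfLE hd₁)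
        rw [Category.assoc, ← Category.assoc (w.F.map _), this, ← Category.assoc, hg₁,
          Category.assoc, Iso.inv_hom_id, Category.comp_id]
      · have := w.cocone.w (homOfLE hd₂)
        rw [Category.assoc, ← Category.assoc (w.F.map _), this, ← Category.assoc, hg₂,
          Category.assoc, Iso.inv_hom_id, Category.comp_id]
    refine ⟨S', ⟨?_, ?_, ?_⟩, fun s' hs' => hs'.1⟩
    · -- nonempty
      obtain ⟨s, hs⟩ := hne
      obtain ⟨w⟩ := hC s.U
      letI := w.instD
      obtain ⟨d₀, -⟩ := w.directed ∅
        (lt_of_lt_of_le (Set.Finite.lt_aleph0 Set.finite_empty) hκ.aleph0_le)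
      have hmono : Mono (w.cocone.ι.app d₀ ≫ w.iso.hom) := by
        haveI := mono_leg_of_lambdaMonoGenerated hC w.directed w.F
          (fun f => w.monoMaps f) w.cocone w.isColimit d₀
        infer_instance
      exact ⟨_, mem_S' s hs (w.F.obj d₀) (w.cocone.ι.app d₀ ≫ w.iso.hom) hmono (w.gen d₀)⟩
    · -- left extension
      rintro s' ⟨hgen', s, hs, m, hm, hml, hmr⟩ G g hg hG
      obtain ⟨s₂, hs₂, t, n, htl, hnl, hnr⟩ := hl s hs G g hg hG
      obtain ⟨W, u, hu, hW, t', m', ht', hm'⟩ :=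
        factor s₂ hs₂ G hG t s'.U hgen' (m ≫ n)
      refine ⟨s₂.restrict u hu,
        mem_S' s₂ hs₂ W u hu hW, t', m', ?_, ?_, ?_⟩
      · show t' ≫ u ≫ s₂.l = g
        rw [← Category.assoc, ht', htl]
      · show m' ≫ u ≫ s₂.l = s'.l
        rw [← Category.assoc, hm', Category.assoc, hnl, hml]
      · show m' ≫ u ≫ s₂.r = s'.r
        rw [← Category.assoc, hm', Category.assoc, hnr, hmr]
    · -- right extension
      rintro s' ⟨hgen', s, hs, m, hm, hml, hmr⟩ G g hg hG
      obtain ⟨s₂, hs₂, t, n, htr, hnl, hnr⟩ := hr s hs G g hg hG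
      obtain ⟨W, u, hu, hW, t', m', ht', hm'⟩ :=
        factor s₂ hs₂ G hG t s'.U hgen' (m ≫ n)
      refine ⟨s₂.restrict u hu,
        mem_S' s₂ hs₂ W u hu hW, t', m', ?_, ?_, ?_⟩
      · show t' ≫ u ≫ s₂.r = g
        rw [← Category.assoc, ht', htr]
      · show m' ≫ u ≫ s₂.l = s'.l
        rw [← Category.assoc, hm', Category.assoc, hnl, hml]
      · show m' ≫ u ≫ s₂.r = s'.r
        rw [← Category.assoc, hm', Category.assoc, hnr, hmr]
  · rintro ⟨S, hd, -⟩
    exact ⟨S, hd⟩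
end

section
/- Let X, Y, Z be objects of a category. Given a λ-dense set S_{XY} of λ-spans between X and Y and a λ-dense set S_{YZ} of λ-spans between Y and Z, define S_{XY} ⋆ S_{YZ} to be the set of λ-spans X ↢ U ↣ Z admitting a factorization through some S ∈ S_{XY} and T ∈ S_{YZ} via morphisms U → S and U → T making the evident diagram commute. Then S_{XY} ⋆ S_{YZ} is a λ-dense set of λ-spans between X and Z. -/
open CategoryTheory CategoryTheory.Limits

universe v u u'

/-- The star-composite of a set of `κ`-spans between `X` and `Y` and a set of `κ`-spans
between `Y` and `Z`: all `κ`-spans `X ↢ U ↣ Z` factoring through a commutative diagram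
via some `S ∈ S_{XY}` and `T ∈ S_{YZ}`. -/
def starComp {C : Type u} [Category.{v} C] (κ : Cardinal.{v}) {X Y Z : C}
    (Sxy : Set (MonoSpan X Y)) (Syz : Set (MonoSpan Y Z)) : Set (MonoSpan X Z) :=
  {u | IsLambdaGenerated κ u.U ∧ ∃ s ∈ Sxy, ∃ t ∈ Syz,
    ∃ (a : u.U ⟶ s.U) (b : u.U ⟶ t.U),
      a ≫ s.l = u.l ∧ a ≫ s.r = b ≫ t.l ∧ b ≫ t.r = u.r}

theorem statement7 {C : Type u} [Category.{v} C] (κ : Cardinal.{v}) (hκ : κ.IsRegular)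
    (X Y Z : C)
    (Sxy : Set (MonoSpan X Y)) (hxy : IsLambdaDense κ Sxy)
    (hxyGen : ∀ s ∈ Sxy, IsLambdaGenerated κ s.U)
    (Syz : Set (MonoSpan Y Z)) (hyz : IsLambdaDense κ Syz)
    (hyzGen : ∀ s ∈ Syz, IsLambdaGenerated κ s.U) :
    IsLambdaDense κ (starComp κ Sxy Syz) ∧
      ∀ u ∈ starComp κ Sxy Syz, IsLambdaGenerated κ u.U := by
  obtain ⟨⟨s0, hs0⟩, hxyL, hxyR⟩ := hxy
  obtain ⟨⟨t0, ht0⟩, hyzL, hyzR⟩ := hyz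
  constructor
  · refine ⟨?_, ?_, ?_⟩
    · -- nonempty
      obtain ⟨t', ht', v, m, hv1, hm1, hm2⟩ :=
        hyzL t0 ht0 s0.U s0.r s0.monoR (hxyGen s0 hs0)
      haveI : Mono t'.l := t'.monoL
      haveI : Mono t'.r := t'.monoR
      haveI hv : Mono v := by
        have h : Mono (v ≫ t'.l) := hv1 ▸ s0.monoR
        exact mono_of_mono v t'.l
      exact ⟨⟨s0.U, s0.l, v ≫ t'.r, s0.monoL, mono_comp v t'.r⟩,
        hxyGen s0 hs0, s0, hs0, t', ht', 𝟙 _, v, by simp, by simp [hv1], rfl⟩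
    · -- forth : G ⟶ X
      rintro u ⟨huGen, s, hs, t, ht, a, b, ha1, hab, hb1⟩ G g hg hG
      obtain ⟨s', hs', t1, m1, ht1, hm11, hm12⟩ := hxyL s hs G g hg hG
      obtain ⟨t', ht', v, m2, hv1, hm21, hm22⟩ :=
        hyzL t ht s'.U s'.r s'.monoR (hxyGen s' hs')
      haveI : Mono t'.l := t'.monoL
      haveI : Mono t'.r := t'.monoR
      haveI hv : Mono v := by
        have h : Mono (v ≫ t'.l) := hv1 ▸ s'.monoR
        exact mono_of_mono v t'.l
      refine ⟨⟨s'.U, s'.l, v ≫ t'.r, s'.monoL, mono_comp v t'.r⟩,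
        ⟨hxyGen s' hs', s', hs', t', ht', 𝟙 _, v, by simp, by simp [hv1], rfl⟩,
        t1, a ≫ m1, ht1, by simp [Category.assoc, hm11, ha1], ?_⟩
      have key : (a ≫ m1) ≫ v = b ≫ m2 := by
        haveI : Mono t'.l := t'.monoL
        rw [← cancel_mono t'.l]
        simp only [Category.assoc, hv1, hm21]
        rw [hm12, hab]
      show (a ≫ m1) ≫ v ≫ t'.r = u.r
      rw [← Category.assoc, key, Category.assoc, hm22, hb1]
    · -- back : G ⟶ Z
      rintro u ⟨huGen, s, hs, t, ht, a, b, ha1, hab, hb1⟩ G g hg hG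
      obtain ⟨t', ht', t1, m2, ht1, hm21, hm22⟩ := hyzR t ht G g hg hG
      obtain ⟨s', hs', v, m1, hv1, hm11, hm12⟩ :=
        hxyR s hs t'.U t'.l t'.monoL (hyzGen t' ht')
      haveI : Mono s'.l := s'.monoL
      haveI : Mono s'.r := s'.monoR
      haveI hv : Mono v := by
        have h : Mono (v ≫ s'.r) := hv1 ▸ t'.monoL
        exact mono_of_mono v s'.r
      refine ⟨⟨t'.U, v ≫ s'.l, t'.r, mono_comp v s'.l, t'.monoR⟩,
        ⟨hyzGen t' ht', s', hs', t', ht', v, 𝟙 _, rfl, by simp [hv1], by simp⟩,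
        t1, b ≫ m2, ht1, ?_, by simp [Category.assoc, hm22, hb1]⟩
      have key : (b ≫ m2) ≫ v = a ≫ m1 := by
        rw [← cancel_mono s'.r]
        simp only [Category.assoc, hv1, hm12]
        rw [hm21, ← hab]
      show (b ≫ m2) ≫ v ≫ s'.l = u.l
      rw [← Category.assoc, key, Category.assoc, hm11, ha1]
  · exact fun u hu => hu.1
end

section
/- In a λ-mono-generated category, the relation ∼_λ of λ-equivalence is an equivalence relation on objects: it is reflexive, symmetric, and transitive. -/
open CategoryTheory CategoryTheory.Limits

universe v u u'

lemma legMono {C : Type u} [Category.{v} C] {κ : Cardinal.{v}}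
    (hC : LambdaMonoGenerated κ C) {D : Type v} [Preorder D]
    (dir : IsLambdaDirected κ D) {F : D ⥤ C}
    (monoMaps : ∀ {d d' : D} (f : d ⟶ d'), Mono (F.map f))
    {c : Cocone F} (hc : IsColimit c) (e : D) : Mono (c.ι.app e) := by
  constructor
  intro G a b hab
  obtain ⟨V⟩ := hC G
  letI := V.instD
  have key : V.iso.hom ≫ a = V.iso.hom ≫ b := by
    apply V.isColimit.hom_ext
    intro j
    have hgen := V.gen j D dir F (fun f => monoMaps f) c hc
    obtain ⟨e', f, hf⟩ := hgen.2 e (V.cocone.ι.app j ≫ V.iso.hom ≫ a)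
      (V.cocone.ι.app j ≫ V.iso.hom ≫ b) (by
        rw [Category.assoc, Category.assoc, Category.assoc, Category.assoc, hab])
    have : Mono (F.map f) := monoMaps f
    have := (cancel_mono (F.map f)).mp hf
    simpa [Category.assoc] using this
  exact (cancel_epi V.iso.hom).mp key
theorem statement8 {C : Type u} [Category.{v} C] (κ : Cardinal.{v}) (hκ : κ.IsRegular)
    (hC : LambdaMonoGenerated κ C) :
    Equivalence (fun X Y : C => LambdaEquiv κ X Y) := by
  constructor
  · -- reflexivity
    intro X
    refine ⟨{⟨X, 𝟙 X, 𝟙 X, inferInstance, inferInstance⟩}, ⟨_, rfl⟩, ?_, ?_⟩ <;>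
    · rintro s rfl G g hg hgen
      exact ⟨_, rfl, g, 𝟙 X, by simp, by simp, by simp⟩
  · -- symmetry
    rintro X Y ⟨S, hne, hL, hR⟩
    refine ⟨(fun s : MonoSpan X Y => (⟨s.U, s.r, s.l, s.monoR, s.monoL⟩ : MonoSpan Y X)) '' S,
      hne.image _, ?_, ?_⟩
    · rintro s' ⟨s, hs, rfl⟩ G g hg hgen
      obtain ⟨s₁, hs₁, t, m, h1, h2, h3⟩ := hR s hs G g hg hgen
      exact ⟨_, ⟨s₁, hs₁, rfl⟩, t, m, h1, h3, h2⟩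
    · rintro s' ⟨s, hs, rfl⟩ G g hg hgen
      obtain ⟨s₁, hs₁, t, m, h1, h2, h3⟩ := hL s hs G g hg hgen
      exact ⟨_, ⟨s₁, hs₁, rfl⟩, t, m, h1, h3, h2⟩
  · -- transitivity

    rintro X Y Z ⟨S, hSne, hSL, hSR⟩ ⟨T, hTne, hTL, hTR⟩
    obtain ⟨W⟩ := hC Y
    letI := W.instD
    have hleg : ∀ e : W.D, Mono (W.cocone.ι.app e ≫ W.iso.hom) := fun e => by
      haveI := legMono hC W.directed (fun f => W.monoMaps f) W.isColimit e
      exact mono_comp _ _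
    have hsmall : ∀ s : Set W.D, s.Finite → Cardinal.mk s < κ := fun s hs =>
      hs.lt_aleph0.trans_le hκ.aleph0_le
    refine ⟨{ r : MonoSpan X Z | ∃ (e : W.D) (s : MonoSpan X Y) (t : MonoSpan Y Z)
        (a : W.F.obj e ⟶ s.U) (b : W.F.obj e ⟶ t.U)
        (_ : s ∈ S) (_ : t ∈ T)
        (_ : a ≫ s.r = W.cocone.ι.app e ≫ W.iso.hom)
        (_ : b ≫ t.l = W.cocone.ι.app e ≫ W.iso.hom)
        (hl : Mono (a ≫ s.l)) (hr : Mono (b ≫ t.r)),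
        r = ⟨W.F.obj e, a ≫ s.l, b ≫ t.r, hl, hr⟩ }, ?_, ?_, ?_⟩
    · -- nonempty
      obtain ⟨e₀, -⟩ := W.directed ∅ (by simpa using hκ.pos)
      obtain ⟨s₀, hs₀⟩ := hSne
      obtain ⟨t₀, ht₀⟩ := hTne
      obtain ⟨s, hs, a, m, ha, -, -⟩ := hSR s₀ hs₀ (W.F.obj e₀)
        (W.cocone.ι.app e₀ ≫ W.iso.hom) (hleg e₀) (W.gen e₀)
      obtain ⟨t, ht, b, n, hb, -, -⟩ := hTL t₀ ht₀ (W.F.obj e₀)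
        (W.cocone.ι.app e₀ ≫ W.iso.hom) (hleg e₀) (W.gen e₀)
      haveI := s.monoL; haveI := t.monoR
      haveI : Mono (a ≫ s.r) := by rw [ha]; exact hleg e₀
      haveI : Mono a := mono_of_mono a s.r
      haveI hl : Mono (a ≫ s.l) := mono_comp _ _
      haveI : Mono (b ≫ t.l) := by rw [hb]; exact hleg e₀
      haveI : Mono b := mono_of_mono b t.l
      haveI hr : Mono (b ≫ t.r) := mono_comp _ _
      exact ⟨⟨W.F.obj e₀, a ≫ s.l, b ≫ t.r, hl, hr⟩,
        e₀, s, t, a, b, hs, ht, ha, hb, hl, hr, rfl⟩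
    · -- left extension
      rintro r hr G g hg hgen
      obtain ⟨e, s, t, a, b, hs, ht, ha, hb, hul, hur, rfl⟩ := hr
      obtain ⟨s₁, hs₁, a₁, m₁, ha₁, hm₁l, hm₁r⟩ := hSL s hs G g hg hgen
      obtain ⟨e₁, h₀, hh₀⟩ := (hgen W.D W.directed W.F (fun f => W.monoMaps f)
        W.cocone W.isColimit).1 ((a₁ ≫ s₁.r) ≫ W.iso.inv)
      obtain ⟨e'', hub⟩ := W.directed {e, e₁}
        (hsmall _ (Set.toFinite _))
      have lee : e ≤ e'' := hub e (by simp)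
      have lee₁ : e₁ ≤ e'' := hub e₁ (by simp)
      obtain ⟨s₂, hs₂, a₂, m₂, ha₂, hm₂l, hm₂r⟩ := hSR s₁ hs₁ (W.F.obj e'')
        (W.cocone.ι.app e'' ≫ W.iso.hom) (hleg e'') (W.gen e'')
      obtain ⟨t₂, ht₂, b₂, n₂, hb₂, hn₂l, hn₂r⟩ := hTL t ht (W.F.obj e'')
        (W.cocone.ι.app e'' ≫ W.iso.hom) (hleg e'') (W.gen e'')
      haveI := s₂.monoL; haveI := s₂.monoR; haveI := t₂.monoL; haveI := t₂.monoR
      haveI : Mono (a₂ ≫ s₂.r) := by rw [ha₂]; exact hleg e''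
      haveI : Mono a₂ := mono_of_mono a₂ s₂.r
      haveI hl₂ : Mono (a₂ ≫ s₂.l) := mono_comp _ _
      haveI : Mono (b₂ ≫ t₂.l) := by rw [hb₂]; exact hleg e''
      haveI : Mono b₂ := mono_of_mono b₂ t₂.l
      haveI hr₂ : Mono (b₂ ≫ t₂.r) := mono_comp _ _
      have key0 : (h₀ ≫ W.F.map (homOfLE lee₁)) ≫ (W.cocone.ι.app e'' ≫ W.iso.hom)
          = a₁ ≫ s₁.r := by
        have := W.cocone.w (homOfLE lee₁)
        slice_lhs 2 3 => rw [this]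
        rw [← Category.assoc, hh₀]
        simp
      have key1 : (h₀ ≫ W.F.map (homOfLE lee₁)) ≫ a₂ = a₁ ≫ m₂ := by
        apply (cancel_mono s₂.r).mp
        rw [Category.assoc, ha₂, key0, Category.assoc, hm₂r]
      have hιe : W.F.map (homOfLE lee) ≫ (W.cocone.ι.app e'' ≫ W.iso.hom)
          = W.cocone.ι.app e ≫ W.iso.hom := by
        rw [← Category.assoc, W.cocone.w (homOfLE lee)]
      have key2 : W.F.map (homOfLE lee) ≫ a₂ = a ≫ (m₁ ≫ m₂) := by
        apply (cancel_mono s₂.r).mp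
        rw [Category.assoc, ha₂, hιe, ← ha]
        simp only [Category.assoc, hm₂r, hm₁r]
      have key3 : W.F.map (homOfLE lee) ≫ b₂ = b ≫ n₂ := by
        apply (cancel_mono t₂.l).mp
        rw [Category.assoc, hb₂, hιe, ← hb]
        simp only [Category.assoc, hn₂l]
      refine ⟨⟨W.F.obj e'', a₂ ≫ s₂.l, b₂ ≫ t₂.r, hl₂, hr₂⟩,
        ⟨e'', s₂, t₂, a₂, b₂, hs₂, ht₂, ha₂, hb₂, hl₂, hr₂, rfl⟩,
        h₀ ≫ W.F.map (homOfLE lee₁), W.F.map (homOfLE lee), ?_, ?_, ?_⟩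
      · show (h₀ ≫ W.F.map (homOfLE lee₁)) ≫ (a₂ ≫ s₂.l) = g
        rw [← Category.assoc, key1, Category.assoc, hm₂l, ha₁]
      · show W.F.map (homOfLE lee) ≫ (a₂ ≫ s₂.l) = a ≫ s.l
        rw [← Category.assoc, key2]
        simp only [Category.assoc, hm₂l, hm₁l]
      · show W.F.map (homOfLE lee) ≫ (b₂ ≫ t₂.r) = b ≫ t.r
        rw [← Category.assoc, key3, Category.assoc, hn₂r]
    · -- right extension
      rintro r hr G g hg hgen
      obtain ⟨e, s, t, a, b, hs, ht, ha, hb, hul, hur, rfl⟩ := hr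
      obtain ⟨t₁, ht₁, b₁, n₁, hb₁, hn₁l, hn₁r⟩ := hTR t ht G g hg hgen
      obtain ⟨e₁, h₀, hh₀⟩ := (hgen W.D W.directed W.F (fun f => W.monoMaps f)
        W.cocone W.isColimit).1 ((b₁ ≫ t₁.l) ≫ W.iso.inv)
      obtain ⟨e'', hub⟩ := W.directed {e, e₁}
        (hsmall _ (Set.toFinite _))
      have lee : e ≤ e'' := hub e (by simp)
      have lee₁ : e₁ ≤ e'' := hub e₁ (by simp)
      obtain ⟨t₂, ht₂, b₂, n₂, hb₂, hn₂l, hn₂r⟩ := hTL t₁ ht₁ (W.F.obj e'')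
        (W.cocone.ι.app e'' ≫ W.iso.hom) (hleg e'') (W.gen e'')
      obtain ⟨s₂, hs₂, a₂, m₂, ha₂, hm₂l, hm₂r⟩ := hSR s hs (W.F.obj e'')
        (W.cocone.ι.app e'' ≫ W.iso.hom) (hleg e'') (W.gen e'')
      haveI := s₂.monoL; haveI := s₂.monoR; haveI := t₂.monoL; haveI := t₂.monoR
      haveI : Mono (a₂ ≫ s₂.r) := by rw [ha₂]; exact hleg e''
      haveI : Mono a₂ := mono_of_mono a₂ s₂.r
      haveI hl₂ : Mono (a₂ ≫ s₂.l) := mono_comp _ _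
      haveI : Mono (b₂ ≫ t₂.l) := by rw [hb₂]; exact hleg e''
      haveI : Mono b₂ := mono_of_mono b₂ t₂.l
      haveI hr₂ : Mono (b₂ ≫ t₂.r) := mono_comp _ _
      have key0 : (h₀ ≫ W.F.map (homOfLE lee₁)) ≫ (W.cocone.ι.app e'' ≫ W.iso.hom)
          = b₁ ≫ t₁.l := by
        have := W.cocone.w (homOfLE lee₁)
        slice_lhs 2 3 => rw [this]
        rw [← Category.assoc, hh₀]
        simp
      have key1 : (h₀ ≫ W.F.map (homOfLE lee₁)) ≫ b₂ = b₁ ≫ n₂ := by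
        apply (cancel_mono t₂.l).mp
        rw [Category.assoc, hb₂, key0, Category.assoc, hn₂l]
      have hιe : W.F.map (homOfLE lee) ≫ (W.cocone.ι.app e'' ≫ W.iso.hom)
          = W.cocone.ι.app e ≫ W.iso.hom := by
        rw [← Category.assoc, W.cocone.w (homOfLE lee)]
      have key2 : W.F.map (homOfLE lee) ≫ a₂ = a ≫ m₂ := by
        apply (cancel_mono s₂.r).mp
        rw [Category.assoc, ha₂, hιe, ← ha]
        simp only [Category.assoc, hm₂r]
      have key3 : W.F.map (homOfLE lee) ≫ b₂ = b ≫ (n₁ ≫ n₂) := by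
        apply (cancel_mono t₂.l).mp
        rw [Category.assoc, hb₂, hιe, ← hb]
        simp only [Category.assoc, hn₂l, hn₁l]
      refine ⟨⟨W.F.obj e'', a₂ ≫ s₂.l, b₂ ≫ t₂.r, hl₂, hr₂⟩,
        ⟨e'', s₂, t₂, a₂, b₂, hs₂, ht₂, ha₂, hb₂, hl₂, hr₂, rfl⟩,
        h₀ ≫ W.F.map (homOfLE lee₁), W.F.map (homOfLE lee), ?_, ?_, ?_⟩
      · show (h₀ ≫ W.F.map (homOfLE lee₁)) ≫ (b₂ ≫ t₂.r) = g
        rw [← Category.assoc, key1, Category.assoc, hn₂r, hb₁]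
      · show W.F.map (homOfLE lee) ≫ (a₂ ≫ s₂.l) = a ≫ s.l
        rw [← Category.assoc, key2, Category.assoc, hm₂l]
      · show W.F.map (homOfLE lee) ≫ (b₂ ≫ t₂.r) = b ≫ t.r
        rw [← Category.assoc, key3]
        simp only [Category.assoc, hn₂r, hn₁r]
end

section
/- Let A be a λ-mono-generated category and X a λ-generated object of A. If X ∼_λ Y, then X and Y are isomorphic. -/
open CategoryTheory CategoryTheory.Limits

universe v u u'

theorem statement9 {C : Type u} [Category.{v} C] (κ : Cardinal.{v}) (hκ : κ.IsRegular)
    (hC : LambdaMonoGenerated κ C) (X Y : C)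
    (hX : IsLambdaGenerated κ X) (hXY : LambdaEquiv κ X Y) :
    Nonempty (X ≅ Y) := by
  obtain ⟨S, ⟨s0, hs0⟩, hback, hforth⟩ := hXY
  -- Apply the back property to `𝟙 X` to get a span whose left leg is split epi.
  obtain ⟨s1, hs1, t1, m1, ht1, hm1l, hm1r⟩ :=
    hback s0 hs0 X (𝟙 X) inferInstance hX
  haveI := s1.monoL
  haveI := s1.monoR
  -- `s1.l` is a mono and split epi, hence `t1` is its two-sided inverse.
  have hl1 : s1.l ≫ t1 = 𝟙 s1.U := by
    rw [← cancel_mono s1.l, Category.assoc, ht1, Category.comp_id, Category.id_comp]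
  set f : X ⟶ Y := t1 ≫ s1.r with hf
  haveI hmt1 : Mono t1 := by
    refine ⟨fun g h w => ?_⟩
    have := congrArg (· ≫ s1.l) w
    simpa [Category.assoc, ht1] using this
  haveI hmf : Mono f := mono_comp _ _
  -- Witness for `Y` as a λ-directed colimit of monos between λ-generated objects.
  obtain ⟨W⟩ := hC Y
  letI := W.instD
  -- The colimit injections are monos.
  have monoι : ∀ d : W.D, Mono (W.cocone.ι.app d) := by
    intro d
    refine ⟨fun {Z} h₁ h₂ hw => ?_⟩
    obtain ⟨V⟩ := hC Z
    letI := V.instD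
    have hcomp : ∀ w : V.D,
        V.cocone.ι.app w ≫ V.iso.hom ≫ h₁ = V.cocone.ι.app w ≫ V.iso.hom ≫ h₂ := by
      intro w
      obtain ⟨-, hinj⟩ :=
        V.gen w W.D W.directed W.F W.monoMaps W.cocone W.isColimit
      obtain ⟨d', e', he'⟩ := hinj d (V.cocone.ι.app w ≫ V.iso.hom ≫ h₁)
        (V.cocone.ι.app w ≫ V.iso.hom ≫ h₂)
        (by simp only [Category.assoc]; rw [hw])
      haveI := W.monoMaps e'
      exact (cancel_mono (W.F.map e')).mp he'
    have : V.iso.hom ≫ h₁ = V.iso.hom ≫ h₂ := V.isColimit.hom_ext hcomp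
    exact (cancel_epi V.iso.hom).mp this
  -- For every `d`, the mono `g_d : W.F.obj d ⟶ Y` lifts along `f`.
  have hexists : ∀ d : W.D, ∃ h : W.F.obj d ⟶ X,
      h ≫ f = W.cocone.ι.app d ≫ W.iso.hom := by
    intro d
    have hmonog : Mono (W.cocone.ι.app d ≫ W.iso.hom) := by
      haveI := monoι d
      exact mono_comp _ _
    obtain ⟨sd, hsd, td, md, htd, hmdl, hmdr⟩ :=
      hforth s1 hs1 (W.F.obj d) (W.cocone.ι.app d ≫ W.iso.hom) hmonog (W.gen d)
    obtain ⟨sd', hsd', t', m', ht', hm'l, hm'r⟩ :=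
      hback sd hsd X (𝟙 X) inferInstance hX
    haveI := sd'.monoL
    -- `t1 ≫ md ≫ m' = t'`
    have key : t1 ≫ md ≫ m' = t' := by
      rw [← cancel_mono sd'.l, Category.assoc, Category.assoc, hm'l, hmdl, ht1, ht']
    -- `sd'.l ≫ t' = 𝟙`
    have hlt' : sd'.l ≫ t' = 𝟙 sd'.U := by
      rw [← cancel_mono sd'.l, Category.assoc, ht', Category.comp_id, Category.id_comp]
    refine ⟨td ≫ m' ≫ sd'.l, ?_⟩
    have hr1 : s1.r = (md ≫ m') ≫ sd'.r := by
      rw [Category.assoc, hm'r, hmdr]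
    calc (td ≫ m' ≫ sd'.l) ≫ f
        = td ≫ m' ≫ sd'.l ≫ t1 ≫ s1.r := by simp [hf, Category.assoc]
      _ = td ≫ m' ≫ sd'.l ≫ t1 ≫ (md ≫ m') ≫ sd'.r := by rw [← hr1]
      _ = td ≫ m' ≫ sd'.l ≫ (t1 ≫ md ≫ m') ≫ sd'.r := by
            simp only [Category.assoc]
      _ = td ≫ m' ≫ (sd'.l ≫ t') ≫ sd'.r := by rw [key]; simp only [Category.assoc]
      _ = td ≫ m' ≫ sd'.r := by rw [hlt', Category.id_comp]
      _ = td ≫ sd.r := by rw [hm'r]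
      _ = W.cocone.ι.app d ≫ W.iso.hom := htd
  choose h hh using hexists
  -- The lifts form a cocone.
  let coc : Cocone W.F :=
    { pt := X
      ι :=
        { app := h
          naturality := by
            intro d d' e
            rw [← cancel_mono f]
            simp only [Category.assoc, Functor.const_obj_obj, Functor.const_obj_map,
              Category.comp_id, hh]
            rw [← Category.assoc, W.cocone.w e] } }
  let u : W.cocone.pt ⟶ X := W.isColimit.desc coc
  have hufac : ∀ d : W.D, W.cocone.ι.app d ≫ u = h d := W.isColimit.fac coc
  have huf : u ≫ f = W.iso.hom := by
    apply W.isColimit.hom_ext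
    intro d
    rw [← Category.assoc, hufac, hh]
  set v : Y ⟶ X := W.iso.inv ≫ u with hv
  have hvf : v ≫ f = 𝟙 Y := by
    rw [hv, Category.assoc, huf, Iso.inv_hom_id]
  have hfv : f ≫ v = 𝟙 X := by
    rw [← cancel_mono f, Category.assoc, hvf, Category.comp_id, Category.id_comp]
  exact ⟨⟨f, v, hfv, hvf⟩⟩
end

section
/- Let A be a λ-mono-generated category and F : A → B a functor preserving monomorphisms and those λ-directed colimits of monomorphisms that exist in A. If X ∼_λ Y in A, then F(X) ∼_λ F(Y) in B. Moreover, if {X ↢ U_i ↣ Y} is a λ-dense set of spans witnessing X ∼_λ Y, then {F(X) ↢ F(U_i) ↣ F(Y)} is a λ-dense set of spans witnessing F(X) ∼_λ F(Y). -/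
open CategoryTheory CategoryTheory.Limits

universe v u u'

/-- The image of a mono-span under a functor preserving monomorphisms. -/
def mapSpan {C : Type u} [Category.{v} C] {B : Type u'} [Category.{v} B]
    (F : C ⥤ B) (hF : ∀ {A A' : C} (f : A ⟶ A'), Mono f → Mono (F.map f))
    {X Y : C} (s : MonoSpan X Y) : MonoSpan (F.obj X) (F.obj Y) :=
  ⟨F.obj s.U, F.map s.l, F.map s.r, hF s.l s.monoL, hF s.r s.monoR⟩

/-- In a `κ`-mono-generated category, the legs of a `κ`-directed colimit of
monomorphisms are monomorphisms. -/
theorem legsMono {C : Type u} [Category.{v} C] (κ : Cardinal.{v})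
    (hC : LambdaMonoGenerated κ C) (D : Type v) [Preorder D]
    (hD : IsLambdaDirected κ D) (G : D ⥤ C)
    (hG : ∀ {d d' : D} (f : d ⟶ d'), Mono (G.map f))
    (c : Cocone G) (hc : IsColimit c) (d : D) : Mono (c.ι.app d) := by
  constructor
  intro T a b hab
  obtain ⟨W⟩ := hC T
  letI : Preorder W.D := W.instD
  have : W.iso.hom ≫ a = W.iso.hom ≫ b := by
    apply W.isColimit.hom_ext
    intro e
    have key := ((W.gen e D hD G hG c hc).2 d
      (W.cocone.ι.app e ≫ W.iso.hom ≫ a) (W.cocone.ι.app e ≫ W.iso.hom ≫ b)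
      (by simp only [Category.assoc, hab]))
    obtain ⟨d', f, hf⟩ := key
    have := hG f
    have := (cancel_mono (G.map f)).1 hf
    simpa using this
  have := (cancel_epi W.iso.hom).1 this
  exact this

/-- Given a mono-gen witness for `X`, the modified cocone with point `X`. -/
def MonoGenWitness.cocone' {C : Type u} [Category.{v} C] {κ : Cardinal.{v}} {X : C}
    (W : MonoGenWitness κ X) :
    letI : Preorder W.D := W.instD
    Cocone W.F :=
  letI : Preorder W.D := W.instD
  { pt := X
    ι := { app := fun d => W.cocone.ι.app d ≫ W.iso.hom
           naturality := fun d d' f => by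
             simp only [Functor.const_obj_map, Category.comp_id,
               ← Category.assoc, W.cocone.w f]
             exact (Category.comp_id _).symm } }

def MonoGenWitness.isColimit' {C : Type u} [Category.{v} C] {κ : Cardinal.{v}} {X : C}
    (W : MonoGenWitness κ X) :
    letI : Preorder W.D := W.instD
    IsColimit W.cocone' :=
  letI : Preorder W.D := W.instD
  W.isColimit.ofIsoColimit (Cocones.ext W.iso (fun _ => rfl))

theorem statement10 {C : Type u} [Category.{v} C] {B : Type u'} [Category.{v} B]
    (κ : Cardinal.{v}) (hκ : κ.IsRegular) (hC : LambdaMonoGenerated κ C)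
    (F : C ⥤ B) (hmono : ∀ {A A' : C} (f : A ⟶ A'), Mono f → Mono (F.map f))
    (hcolim : ∀ (D : Type v) [Preorder D], IsLambdaDirected κ D →
      ∀ (G : D ⥤ C), (∀ {d d' : D} (f : d ⟶ d'), Mono (G.map f)) →
      ∀ (c : Cocone G), IsColimit c → Nonempty (IsColimit (F.mapCocone c)))
    (X Y : C) :
    (LambdaEquiv κ X Y → LambdaEquiv κ (F.obj X) (F.obj Y)) ∧
    (∀ S : Set (MonoSpan X Y), IsLambdaDense κ S →
      IsLambdaDense κ (mapSpan F hmono '' S)) := by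
  have main : ∀ S : Set (MonoSpan X Y), IsLambdaDense κ S →
      IsLambdaDense κ (mapSpan F hmono '' S) := by
    intro S ⟨hne, hleft, hright⟩
    refine ⟨hne.image _, ?_, ?_⟩
    · -- left extension
      rintro _ ⟨s, hs, rfl⟩ G g hg hGgen
      obtain ⟨W⟩ := hC X
      letI : Preorder W.D := W.instD
      have hc' := W.isColimit'
      obtain ⟨hFc'⟩ := hcolim W.D W.directed W.F W.monoMaps W.cocone' hc'
      obtain ⟨d, h, hh⟩ := (hGgen W.D W.directed (W.F ⋙ F)
        (fun f => hmono _ (W.monoMaps f)) (F.mapCocone W.cocone') hFc').1 g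
      have hmonoleg : Mono (W.cocone'.ι.app d) :=
        legsMono κ hC W.D W.directed W.F W.monoMaps W.cocone' hc' d
      obtain ⟨s', hs', t, m, ht, hml, hmr⟩ :=
        hleft s hs (W.F.obj d) (W.cocone'.ι.app d) hmonoleg (W.gen d)
      refine ⟨mapSpan F hmono s', ⟨s', hs', rfl⟩, h ≫ F.map t, F.map m, ?_, ?_, ?_⟩
      · show (h ≫ F.map t) ≫ F.map s'.l = g
        rw [Category.assoc, ← F.map_comp, ht]
        exact hh
      · show F.map m ≫ F.map s'.l = F.map s.l
        rw [← F.map_comp, hml]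
      · show F.map m ≫ F.map s'.r = F.map s.r
        rw [← F.map_comp, hmr]
    · -- right extension
      rintro _ ⟨s, hs, rfl⟩ G g hg hGgen
      obtain ⟨W⟩ := hC Y
      letI : Preorder W.D := W.instD
      have hc' := W.isColimit'
      obtain ⟨hFc'⟩ := hcolim W.D W.directed W.F W.monoMaps W.cocone' hc'
      obtain ⟨d, h, hh⟩ := (hGgen W.D W.directed (W.F ⋙ F)
        (fun f => hmono _ (W.monoMaps f)) (F.mapCocone W.cocone') hFc').1 g
      have hmonoleg : Mono (W.cocone'.ι.app d) :=
        legsMono κ hC W.D W.directed W.F W.monoMaps W.cocone' hc' d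
      obtain ⟨s', hs', t, m, ht, hml, hmr⟩ :=
        hright s hs (W.F.obj d) (W.cocone'.ι.app d) hmonoleg (W.gen d)
      refine ⟨mapSpan F hmono s', ⟨s', hs', rfl⟩, h ≫ F.map t, F.map m, ?_, ?_, ?_⟩
      · show (h ≫ F.map t) ≫ F.map s'.r = g
        rw [Category.assoc, ← F.map_comp, ht]
        exact hh
      · show F.map m ≫ F.map s'.l = F.map s.l
        rw [← F.map_comp, hml]
      · show F.map m ≫ F.map s'.r = F.map s.r
        rw [← F.map_comp, hmr]
  exact ⟨fun ⟨S, hS⟩ => ⟨mapSpan F hmono '' S, main S hS⟩, main⟩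
end

section
/- Let A and B be λ-mono-generated categories and F : A → B a fully faithful functor (the inclusion of a full subcategory) preserving monomorphisms, λ-directed colimits of monomorphisms, and λ-generated objects. Then for objects X, Y of A, X ∼_λ Y in A if and only if F(X) ∼_λ F(Y) in B. -/
open CategoryTheory CategoryTheory.Limits

universe v u u'

/-- helper: upper bound for a pair in a `κ`-directed preorder, `κ` regular. -/
lemma pairBound {κ : Cardinal.{v}} (hκ : κ.IsRegular) {D : Type v} [Preorder D]
    (h : IsLambdaDirected κ D) (d₁ d₂ : D) : ∃ d, d₁ ≤ d ∧ d₂ ≤ d := by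
  obtain ⟨d, hd⟩ := h {d₁, d₂}
    (lt_of_lt_of_le (Set.toFinite _).lt_aleph0 hκ.aleph0_le)
  exact ⟨d, hd d₁ (by simp), hd d₂ (by simp)⟩

/-- helper: a `κ`-directed preorder is nonempty when `κ` is regular. -/
lemma existsElem {κ : Cardinal.{v}} (hκ : κ.IsRegular) {D : Type v} [Preorder D]
    (h : IsLambdaDirected κ D) : Nonempty D := by
  obtain ⟨d, -⟩ := h ∅ (by rw [Cardinal.mk_emptyCollection]; exact hκ.pos)
  exact ⟨d⟩

/-- In a `κ`-mono-generated category, the legs of a `κ`-directed colimit cocone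
of monomorphisms are monomorphisms. -/
lemma iotaMono {C : Type u} [Category.{v} C] {κ : Cardinal.{v}}
    (hC : LambdaMonoGenerated κ C) (D : Type v) [Preorder D]
    (hdir : IsLambdaDirected κ D) (G : D ⥤ C)
    (hm : ∀ {d d' : D} (f : d ⟶ d'), Mono (G.map f))
    (c : Cocone G) (hc : IsColimit c) (d : D) : Mono (c.ι.app d) := by
  constructor
  intro T u v huv
  obtain ⟨Z⟩ := hC T
  letI := Z.instD
  have key : ∀ j : Z.D, (Z.cocone.ι.app j ≫ Z.iso.hom) ≫ u
      = (Z.cocone.ι.app j ≫ Z.iso.hom) ≫ v := by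
    intro j
    obtain ⟨d', e, he⟩ := (Z.gen j D hdir G hm c hc).2 d
      ((Z.cocone.ι.app j ≫ Z.iso.hom) ≫ u) ((Z.cocone.ι.app j ≫ Z.iso.hom) ≫ v)
      (by simp only [Category.assoc, huv])
    haveI := hm e
    exact (cancel_mono (G.map e)).mp he
  have h2 : Z.iso.hom ≫ u = Z.iso.hom ≫ v :=
    Z.isColimit.hom_ext (fun j => by simpa only [Category.assoc] using key j)
  exact (cancel_epi Z.iso.hom).mp h2

/-- helper: factor a map out of a `κ`-generated object through a colimit leg. -/
lemma legFactor {C : Type u} [Category.{v} C] {κ : Cardinal.{v}} {X : C}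
    (D : Type v) [Preorder D] (hdir : IsLambdaDirected κ D) (G : D ⥤ C)
    (hm : ∀ {d d' : D} (f : d ⟶ d'), Mono (G.map f)) (c : Cocone G) (hc : IsColimit c)
    (iso : c.pt ≅ X) {A : C} (hA : IsLambdaGenerated κ A) (f : A ⟶ X) :
    ∃ (d : D) (g : A ⟶ G.obj d), g ≫ c.ι.app d ≫ iso.hom = f := by
  obtain ⟨d, g, h⟩ := (hA D hdir G hm c hc).1 (f ≫ iso.inv)
  exact ⟨d, g, by rw [← Category.assoc, h, Category.assoc, Iso.inv_hom_id, Category.comp_id]⟩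

/-- helper: factor two maps out of `κ`-generated objects through a common colimit leg. -/
lemma legFactor2 {C : Type u} [Category.{v} C] {κ : Cardinal.{v}} (hκ : κ.IsRegular) {X : C}
    (D : Type v) [Preorder D] (hdir : IsLambdaDirected κ D) (G : D ⥤ C)
    (hm : ∀ {d d' : D} (f : d ⟶ d'), Mono (G.map f)) (c : Cocone G) (hc : IsColimit c)
    (iso : c.pt ≅ X) {A₁ A₂ : C} (h₁ : IsLambdaGenerated κ A₁) (h₂ : IsLambdaGenerated κ A₂)
    (f₁ : A₁ ⟶ X) (f₂ : A₂ ⟶ X) :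
    ∃ (d : D) (g₁ : A₁ ⟶ G.obj d) (g₂ : A₂ ⟶ G.obj d),
      g₁ ≫ c.ι.app d ≫ iso.hom = f₁ ∧ g₂ ≫ c.ι.app d ≫ iso.hom = f₂ := by
  obtain ⟨d₁, g₁, hg₁⟩ := legFactor D hdir G hm c hc iso h₁ f₁
  obtain ⟨d₂, g₂, hg₂⟩ := legFactor D hdir G hm c hc iso h₂ f₂
  obtain ⟨d, hd₁, hd₂⟩ := pairBound hκ hdir d₁ d₂
  refine ⟨d, g₁ ≫ G.map (homOfLE hd₁), g₂ ≫ G.map (homOfLE hd₂), ?_, ?_⟩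
  · rw [Category.assoc, ← Category.assoc (G.map _), c.w, hg₁]
  · rw [Category.assoc, ← Category.assoc (G.map _), c.w, hg₂]

theorem statement12 {C : Type u} [Category.{v} C] {B : Type u'} [Category.{v} B]
    (κ : Cardinal.{v}) (hκ : κ.IsRegular)
    (hC : LambdaMonoGenerated κ C) (hB : LambdaMonoGenerated κ B)
    (F : C ⥤ B) (hfull : F.Full) (hfaithful : F.Faithful)
    (hmono : ∀ {A A' : C} (f : A ⟶ A'), Mono f → Mono (F.map f))
    (hcolim : ∀ (D : Type v) [Preorder D], IsLambdaDirected κ D →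
      ∀ (G : D ⥤ C), (∀ {d d' : D} (f : d ⟶ d'), Mono (G.map f)) →
      ∀ (c : Cocone G), IsColimit c → Nonempty (IsColimit (F.mapCocone c)))
    (hgen : ∀ X : C, IsLambdaGenerated κ X → IsLambdaGenerated κ (F.obj X))
    (X Y : C) :
    LambdaEquiv κ X Y ↔ LambdaEquiv κ (F.obj X) (F.obj Y) := by
  haveI := hfull
  haveI := hfaithful
  obtain ⟨WX⟩ := hC X
  obtain ⟨WY⟩ := hC Y
  letI := WX.instD
  letI := WY.instD
  -- the legs of the canonical colimit presentations
  have lXmono : ∀ d : WX.D, Mono (WX.cocone.ι.app d ≫ WX.iso.hom) := fun d => by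
    haveI := iotaMono hC WX.D WX.directed WX.F WX.monoMaps WX.cocone WX.isColimit d
    exact mono_comp _ _
  have lYmono : ∀ d : WY.D, Mono (WY.cocone.ι.app d ≫ WY.iso.hom) := fun d => by
    haveI := iotaMono hC WY.D WY.directed WY.F WY.monoMaps WY.cocone WY.isColimit d
    exact mono_comp _ _
  constructor
  · -- forward direction
    rintro ⟨S, ⟨s₀, hs₀⟩, hforth, hback⟩
    obtain ⟨hcX⟩ := hcolim WX.D WX.directed WX.F WX.monoMaps WX.cocone WX.isColimit
    obtain ⟨hcY⟩ := hcolim WY.D WY.directed WY.F WY.monoMaps WY.cocone WY.isColimit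
    refine ⟨{s' | ∃ s ∈ S, ∃ u : s'.U ⟶ F.obj s.U,
      u ≫ F.map s.l = s'.l ∧ u ≫ F.map s.r = s'.r}, ?_, ?_, ?_⟩
    · exact ⟨⟨F.obj s₀.U, F.map s₀.l, F.map s₀.r, hmono _ s₀.monoL, hmono _ s₀.monoR⟩,
        s₀, hs₀, 𝟙 _, Category.id_comp _, Category.id_comp _⟩
    · rintro s' ⟨s, hs, u, hul, hur⟩ G g hg hGgen
      obtain ⟨d, g₀, hfac⟩ := legFactor WX.D WX.directed (WX.F ⋙ F)
        (fun f => hmono _ (WX.monoMaps f)) (F.mapCocone WX.cocone) hcX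
        (F.mapIso WX.iso) hGgen g
      have hfac' : g₀ ≫ F.map (WX.cocone.ι.app d ≫ WX.iso.hom) = g := by
        rw [Functor.map_comp]; exact hfac
      obtain ⟨s₂, hs₂, tC, mC, h1, h2, h3⟩ :=
        hforth s hs (WX.F.obj d) (WX.cocone.ι.app d ≫ WX.iso.hom) (lXmono d) (WX.gen d)
      refine ⟨⟨F.obj s₂.U, F.map s₂.l, F.map s₂.r, hmono _ s₂.monoL, hmono _ s₂.monoR⟩,
        ⟨s₂, hs₂, 𝟙 _, Category.id_comp _, Category.id_comp _⟩,
        g₀ ≫ F.map tC, u ≫ F.map mC, ?_, ?_, ?_⟩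
      · rw [Category.assoc, ← Functor.map_comp, h1, hfac']
      · rw [Category.assoc, ← Functor.map_comp, h2, hul]
      · rw [Category.assoc, ← Functor.map_comp, h3, hur]
    · rintro s' ⟨s, hs, u, hul, hur⟩ G g hg hGgen
      obtain ⟨e, g₀, hfac⟩ := legFactor WY.D WY.directed (WY.F ⋙ F)
        (fun f => hmono _ (WY.monoMaps f)) (F.mapCocone WY.cocone) hcY
        (F.mapIso WY.iso) hGgen g
      have hfac' : g₀ ≫ F.map (WY.cocone.ι.app e ≫ WY.iso.hom) = g := by
        rw [Functor.map_comp]; exact hfac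
      obtain ⟨s₂, hs₂, tC, mC, h1, h2, h3⟩ :=
        hback s hs (WY.F.obj e) (WY.cocone.ι.app e ≫ WY.iso.hom) (lYmono e) (WY.gen e)
      refine ⟨⟨F.obj s₂.U, F.map s₂.l, F.map s₂.r, hmono _ s₂.monoL, hmono _ s₂.monoR⟩,
        ⟨s₂, hs₂, 𝟙 _, Category.id_comp _, Category.id_comp _⟩,
        g₀ ≫ F.map tC, u ≫ F.map mC, ?_, ?_, ?_⟩
      · rw [Category.assoc, ← Functor.map_comp, h1, hfac']
      · rw [Category.assoc, ← Functor.map_comp, h2, hul]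
      · rw [Category.assoc, ← Functor.map_comp, h3, hur]
  · -- backward direction
    rintro ⟨S', ⟨s₀', hs₀'⟩, hforth, hback⟩
    refine ⟨{s : MonoSpan X Y | IsLambdaGenerated κ s.U ∧ ∃ s' ∈ S',
      ∃ u : F.obj s.U ⟶ s'.U, u ≫ s'.l = F.map s.l ∧ u ≫ s'.r = F.map s.r}, ?_, ?_, ?_⟩
    · -- nonempty
      obtain ⟨d₀⟩ := existsElem hκ WX.directed
      obtain ⟨s''', hs''', w, m', hw, hm'l, hm'r⟩ :=
        hforth s₀' hs₀' (F.obj (WX.F.obj d₀))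
          (F.map (WX.cocone.ι.app d₀ ≫ WX.iso.hom)) (hmono _ (lXmono d₀))
          (hgen _ (WX.gen d₀))
      haveI := s'''.monoL
      haveI := s'''.monoR
      haveI : Mono (w ≫ s'''.l) := hw ▸ hmono _ (lXmono d₀)
      haveI : Mono w := mono_of_mono w s'''.l
      have hmb : Mono (F.map (F.preimage (w ≫ s'''.r))) := by
        rw [F.map_preimage]; exact mono_comp _ _
      refine ⟨⟨WX.F.obj d₀, WX.cocone.ι.app d₀ ≫ WX.iso.hom, F.preimage (w ≫ s'''.r),
        lXmono d₀, F.mono_of_mono_map hmb⟩, WX.gen d₀, s''', hs''', w, hw, ?_⟩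
      rw [F.map_preimage]
    · -- forth
      rintro ⟨A, a, b, hma, hmb⟩ ⟨hsgen, s', hs', u, hul, hur⟩ G g hg hGgen
      obtain ⟨d, g₀, a₀, hg₀, ha₀⟩ := legFactor2 hκ WX.D WX.directed WX.F WX.monoMaps
        WX.cocone WX.isColimit WX.iso hGgen hsgen g a
      obtain ⟨s''', hs''', w, m', hw, hm'l, hm'r⟩ :=
        hforth s' hs' (F.obj (WX.F.obj d))
          (F.map (WX.cocone.ι.app d ≫ WX.iso.hom)) (hmono _ (lXmono d))
          (hgen _ (WX.gen d))
      haveI := s'''.monoL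
      haveI := s'''.monoR
      haveI : Mono (w ≫ s'''.l) := hw ▸ hmono _ (lXmono d)
      haveI : Mono w := mono_of_mono w s'''.l
      have hmb' : Mono (F.map (F.preimage (w ≫ s'''.r))) := by
        rw [F.map_preimage]; exact mono_comp _ _
      have key : F.map a₀ ≫ w = u ≫ m' := by
        rw [← cancel_mono s'''.l, Category.assoc, Category.assoc, hw, hm'l,
          ← Functor.map_comp, ha₀, hul]
      refine ⟨⟨WX.F.obj d, WX.cocone.ι.app d ≫ WX.iso.hom, F.preimage (w ≫ s'''.r),
        lXmono d, F.mono_of_mono_map hmb'⟩,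
        ⟨WX.gen d, s''', hs''', w, hw, by rw [F.map_preimage]⟩, g₀, a₀, hg₀, ha₀, ?_⟩
      apply F.map_injective
      rw [Functor.map_comp, F.map_preimage, ← Category.assoc, key, Category.assoc,
        hm'r, hur]
    · -- back
      rintro ⟨A, a, b, hma, hmb⟩ ⟨hsgen, s', hs', u, hul, hur⟩ G g hg hGgen
      obtain ⟨e, g₀, b₀, hg₀, hb₀⟩ := legFactor2 hκ WY.D WY.directed WY.F WY.monoMaps
        WY.cocone WY.isColimit WY.iso hGgen hsgen g b
      obtain ⟨s''', hs''', w, m', hw, hm'l, hm'r⟩ :=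
        hback s' hs' (F.obj (WY.F.obj e))
          (F.map (WY.cocone.ι.app e ≫ WY.iso.hom)) (hmono _ (lYmono e))
          (hgen _ (WY.gen e))
      haveI := s'''.monoL
      haveI := s'''.monoR
      haveI : Mono (w ≫ s'''.r) := hw ▸ hmono _ (lYmono e)
      haveI : Mono w := mono_of_mono w s'''.r
      have hma' : Mono (F.map (F.preimage (w ≫ s'''.l))) := by
        rw [F.map_preimage]; exact mono_comp _ _
      have key : F.map b₀ ≫ w = u ≫ m' := by
        rw [← cancel_mono s'''.r, Category.assoc, Category.assoc, hw, hm'r,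
          ← Functor.map_comp, hb₀, hur]
      refine ⟨⟨WY.F.obj e, F.preimage (w ≫ s'''.l), WY.cocone.ι.app e ≫ WY.iso.hom,
        F.mono_of_mono_map hma', lYmono e⟩,
        ⟨WY.gen e, s''', hs''', w, by rw [F.map_preimage], hw⟩, g₀, b₀, hg₀, ?_, hb₀⟩
      apply F.map_injective
      rw [Functor.map_comp, F.map_preimage, ← Category.assoc, key, Category.assoc,
        hm'l, hul]
end

section
/- In a λ-mono-generated category, every λ-embedding is a monomorphism. -/
open CategoryTheory CategoryTheory.Limits

universe v u u'

/-- In a λ-mono-generated category, the colimit injections of a mono-gen witness are monos. -/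
lemma monoGenWitness_inj_mono {C : Type u} [Category.{v} C] {κ : Cardinal.{v}}
    (hC : LambdaMonoGenerated κ C) {X : C} (w : MonoGenWitness κ X) (d : w.D) :
    letI := w.instD
    Mono (w.cocone.ι.app d) := by
  letI := w.instD
  constructor
  intro W u v huv
  obtain ⟨w'⟩ := hC W
  letI := w'.instD
  have key : ∀ e : w'.D,
      (w'.cocone.ι.app e ≫ w'.iso.hom) ≫ u = (w'.cocone.ι.app e ≫ w'.iso.hom) ≫ v := by
    intro e
    have h2 := ((w'.gen e) w.D w.directed w.F (fun {_ _} m => w.monoMaps m)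
      w.cocone w.isColimit).2 d ((w'.cocone.ι.app e ≫ w'.iso.hom) ≫ u)
      ((w'.cocone.ι.app e ≫ w'.iso.hom) ≫ v)
      (by simp only [Category.assoc, huv])
    obtain ⟨d', m, hm⟩ := h2
    haveI := w.monoMaps m
    exact (cancel_mono (w.F.map m)).mp hm
  have h3 : w'.iso.hom ≫ u = w'.iso.hom ≫ v :=
    w'.isColimit.hom_ext (fun e => by
      simpa only [Category.assoc] using key e)
  calc u = w'.iso.inv ≫ (w'.iso.hom ≫ u) := by simp
  _ = w'.iso.inv ≫ (w'.iso.hom ≫ v) := by rw [h3]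
  _ = v := by simp

theorem statement13 {C : Type u} [Category.{v} C] (κ : Cardinal.{v}) (hκ : κ.IsRegular)
    (hC : LambdaMonoGenerated κ C) {X Y : C} (f : X ⟶ Y)
    (hf : IsLambdaEmbedding κ f) :
    Mono f := by
  obtain ⟨S, hS, hemb⟩ := hf
  obtain ⟨wX⟩ := hC X
  letI := wX.instD
  -- key claim: λ-generated objects separate maps into X along f
  have keyG : ∀ (G : C), IsLambdaGenerated κ G → ∀ g h : G ⟶ X,
      g ≫ f = h ≫ f → g = h := by
    intro G hG g h ghf
    have hgen := hG wX.D wX.directed wX.F (fun {_ _} m => wX.monoMaps m)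
      wX.cocone wX.isColimit
    obtain ⟨d1, g1, hg1⟩ := hgen.1 (g ≫ wX.iso.inv)
    obtain ⟨d2, h1, hh1⟩ := hgen.1 (h ≫ wX.iso.inv)
    obtain ⟨d, hd⟩ := wX.directed {d1, d2}
      ((Cardinal.lt_aleph0_iff_set_finite.mpr ((Set.finite_singleton d2).insert d1)).trans_le
        hκ.aleph0_le)
    have e1 : d1 ⟶ d := homOfLE (hd d1 (by simp))
    have e2 : d2 ⟶ d := homOfLE (hd d2 (by simp))
    set g2 : wX.F.obj d1 ⟶ wX.F.obj d := wX.F.map e1 with hg2def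
    set h2 : wX.F.obj d2 ⟶ wX.F.obj d := wX.F.map e2 with hh2def
    set ι : wX.F.obj d ⟶ X := wX.cocone.ι.app d ≫ wX.iso.hom with hιdef
    have hιmono : Mono ι := by
      haveI := monoGenWitness_inj_mono hC wX d
      exact mono_comp _ _
    have hgfac : (g1 ≫ g2) ≫ ι = g := by
      rw [hιdef, hg2def, Category.assoc, ← Category.assoc _ (wX.cocone.ι.app d),
        wX.cocone.w e1, ← Category.assoc, hg1]
      simp
    have hhfac : (h1 ≫ h2) ≫ ι = h := by
      rw [hιdef, hh2def, Category.assoc, ← Category.assoc _ (wX.cocone.ι.app d),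
        wX.cocone.w e2, ← Category.assoc, hh1]
      simp
    obtain ⟨s, hsS, t, ht1, ht2⟩ := hemb (wX.F.obj d) ι hιmono (wX.gen d)
    haveI := s.monoR
    have hgf : (g1 ≫ g2) ≫ (t ≫ s.r) = g ≫ f := by
      rw [ht2, ← Category.assoc, hgfac]
    have hhf : (h1 ≫ h2) ≫ (t ≫ s.r) = h ≫ f := by
      rw [ht2, ← Category.assoc, hhfac]
    have hcancel : (g1 ≫ g2) ≫ t = (h1 ≫ h2) ≫ t := by
      apply (cancel_mono s.r).mp
      simp only [Category.assoc] at hgf hhf ⊢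
      rw [hgf, hhf]
      exact ghf
    calc g = (g1 ≫ g2) ≫ ι := hgfac.symm
    _ = ((g1 ≫ g2) ≫ t) ≫ s.l := by simp only [Category.assoc, ht1]
    _ = ((h1 ≫ h2) ≫ t) ≫ s.l := by rw [hcancel]
    _ = (h1 ≫ h2) ≫ ι := by simp only [Category.assoc, ht1]
    _ = h := hhfac
  constructor
  intro Z a b hab
  obtain ⟨wZ⟩ := hC Z
  letI := wZ.instD
  have key : ∀ e : wZ.D,
      wZ.cocone.ι.app e ≫ (wZ.iso.hom ≫ a) = wZ.cocone.ι.app e ≫ (wZ.iso.hom ≫ b) := by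
    intro e
    have := keyG (wZ.F.obj e) (wZ.gen e)
      ((wZ.cocone.ι.app e ≫ wZ.iso.hom) ≫ a) ((wZ.cocone.ι.app e ≫ wZ.iso.hom) ≫ b)
      (by simp only [Category.assoc, hab])
    simpa only [Category.assoc] using this
  have h3 : wZ.iso.hom ≫ a = wZ.iso.hom ≫ b := wZ.isColimit.hom_ext key
  calc a = wZ.iso.inv ≫ (wZ.iso.hom ≫ a) := by simp
  _ = wZ.iso.inv ≫ (wZ.iso.hom ≫ b) := by rw [h3]
  _ = b := by simp
end

section
/- In a λ-mono-generated category, every λ-embedding f : X → Y is λ-pure in the subcategory of monomorphisms: given any commutative square f∘u = v∘g with u : A ↣ X, g : A ↣ B, v : B ↣ Y all monomorphisms and A, B λ-generated, there exists t : B → X with t∘g = u. -/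
open CategoryTheory CategoryTheory.Limits

universe v u u'

theorem statement14 {C : Type u} [Category.{v} C] (κ : Cardinal.{v}) (hκ : κ.IsRegular)
    (hC : LambdaMonoGenerated κ C) {X Y A B : C} (f : X ⟶ Y)
    (hf : IsLambdaEmbedding κ f)
    (u : A ⟶ X) (g : A ⟶ B) (v : B ⟶ Y)
    (hu : Mono u) (hg : Mono g) (hv : Mono v)
    (hA : IsLambdaGenerated κ A) (hB : IsLambdaGenerated κ B)
    (hsq : u ≫ f = g ≫ v) :
    ∃ t : B ⟶ X, g ≫ t = u := by
  obtain ⟨S, ⟨_, _, hback⟩, hemb⟩ := hf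
  obtain ⟨s, hs, t, ht1, ht2⟩ := hemb A u hu hA
  obtain ⟨s', hs', t', m, ht'1, hm1, hm2⟩ := hback s hs B v hv hB
  have hmono := s'.monoR
  have hcomp : t ≫ m = g ≫ t' := by
    apply (cancel_mono s'.r).mp
    rw [Category.assoc, Category.assoc, hm2, ht2, ht'1, hsq]
  refine ⟨t' ≫ s'.l, ?_⟩
  rw [← Category.assoc, ← hcomp, Category.assoc, hm1, ht1]
end

section
/- Let A be a λ-mono-generated category and f : X → Y a λ-embedding with both X and Y λ-generated. Then f is an isomorphism. -/
open CategoryTheory CategoryTheory.Limits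

universe v u u'

theorem statement15 {C : Type u} [Category.{v} C] (κ : Cardinal.{v}) (hκ : κ.IsRegular)
    (hC : LambdaMonoGenerated κ C) {X Y : C} (f : X ⟶ Y)
    (hf : IsLambdaEmbedding κ f)
    (hX : IsLambdaGenerated κ X) (hY : IsLambdaGenerated κ Y) :
    IsIso f := by
  obtain ⟨S, hdense, hfact⟩ := hf
  obtain ⟨s, hs, t, ht1, ht2⟩ := hfact X (𝟙 X) inferInstance hX
  obtain ⟨-, -, hback⟩ := hdense
  obtain ⟨s', hs', t', m, h1, h2, h3⟩ := hback s hs Y (𝟙 Y) inferInstance hY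
  haveI := s.monoL; haveI := s.monoR; haveI := s'.monoL; haveI := s'.monoR
  -- s.l ≫ t = 𝟙
  have hlt : s.l ≫ t = 𝟙 s.U := by
    have : (s.l ≫ t) ≫ s.l = 𝟙 s.U ≫ s.l := by
      rw [Category.assoc, ht1]; simp
    exact Mono.right_cancellation _ _ this
  -- s'.r ≫ t' = 𝟙
  have hrt : s'.r ≫ t' = 𝟙 s'.U := by
    have : (s'.r ≫ t') ≫ s'.r = 𝟙 s'.U ≫ s'.r := by
      rw [Category.assoc, h1]; simp
    exact Mono.right_cancellation _ _ this
  have hf_eq : f = t ≫ s.r := by rw [ht2]; simp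
  set g : Y ⟶ X := t' ≫ s'.l with hg
  have hfg : f ≫ g = 𝟙 X := by
    rw [hf_eq, hg, ← h3]
    calc (t ≫ m ≫ s'.r) ≫ t' ≫ s'.l
        = t ≫ m ≫ (s'.r ≫ t') ≫ s'.l := by simp only [Category.assoc]
      _ = t ≫ m ≫ s'.l := by rw [hrt]; simp
      _ = t ≫ s.l := by rw [h2]
      _ = 𝟙 X := ht1
  haveI : IsIso t' := ⟨s'.r, h1, hrt⟩
  haveI : Mono g := mono_comp _ _
  have hgf : g ≫ f = 𝟙 Y := by
    have : (g ≫ f) ≫ g = 𝟙 Y ≫ g := by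
      rw [Category.assoc, hfg]; simp
    exact Mono.right_cancellation _ _ this
  exact ⟨g, hfg, hgf⟩
end

section
/- In a λ-mono-generated category, λ-embeddings are closed under composition: if f : X → Y and g : Y → Z are λ-embeddings, then g∘f : X → Z is a λ-embedding. -/
open CategoryTheory CategoryTheory.Limits

universe v u u'

attribute [instance] MonoGenWitness.instD

section Aux

variable {C : Type u} [Category.{v} C] {κ : Cardinal.{v}}

lemma mono_of_comp_eq' {A B XX : C} {t : A ⟶ B} {l : B ⟶ XX} {h : A ⟶ XX}
    (e : t ≫ l = h) (hm : Mono h) : Mono t := by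
  have : Mono (t ≫ l) := e ▸ hm
  exact mono_of_mono t l

lemma leg_mono' (hC : LambdaMonoGenerated κ C)
    {B : C} (w : MonoGenWitness κ B) (d : w.D) : Mono (w.cocone.ι.app d) := by
  letI := w.instD
  constructor
  intro A a b hab
  obtain ⟨wA⟩ := hC A
  letI := wA.instD
  have key : ∀ e : wA.D, wA.cocone.ι.app e ≫ (wA.iso.hom ≫ a)
      = wA.cocone.ι.app e ≫ (wA.iso.hom ≫ b) := by
    intro e
    have hgen := (wA.gen e w.D w.directed w.F (fun {d d'} f => w.monoMaps f)
      w.cocone w.isColimit).2 d (wA.cocone.ι.app e ≫ wA.iso.hom ≫ a)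
      (wA.cocone.ι.app e ≫ wA.iso.hom ≫ b) (by simp only [Category.assoc, hab])
    obtain ⟨d', e', he⟩ := hgen
    haveI := w.monoMaps e'
    exact (cancel_mono (w.F.map e')).mp he
  have h2 : wA.iso.hom ≫ a = wA.iso.hom ≫ b := wA.isColimit.hom_ext key
  simpa using (wA.iso.cancel_iso_hom_left a b).mp h2

lemma exists_gen_mono' (hκ : κ.IsRegular) (hC : LambdaMonoGenerated κ C) (B : C) :
    ∃ (G : C) (h : G ⟶ B), IsLambdaGenerated κ G ∧ Mono h := by
  obtain ⟨w⟩ := hC B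
  letI := w.instD
  obtain ⟨d, -⟩ := w.directed ∅ (by
    rw [Cardinal.mk_emptyCollection]
    exact hκ.pos)
  haveI := leg_mono' hC w d
  exact ⟨w.F.obj d, w.cocone.ι.app d ≫ w.iso.hom, w.gen d, mono_comp _ _⟩

lemma factor_two' (hκ : κ.IsRegular) (hC : LambdaMonoGenerated κ C) {B G W : C}
    (hG : IsLambdaGenerated κ G) (hW : IsLambdaGenerated κ W)
    (t : G ⟶ B) (u : W ⟶ B) :
    ∃ (V : C) (ι : V ⟶ B) (a : G ⟶ V) (b : W ⟶ V),
      IsLambdaGenerated κ V ∧ Mono ι ∧ a ≫ ι = t ∧ b ≫ ι = u := by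
  obtain ⟨w⟩ := hC B
  letI := w.instD
  obtain ⟨d₁, g₁, hg₁⟩ := (hG w.D w.directed w.F (fun {d d'} f => w.monoMaps f)
    w.cocone w.isColimit).1 (t ≫ w.iso.inv)
  obtain ⟨d₂, g₂, hg₂⟩ := (hW w.D w.directed w.F (fun {d d'} f => w.monoMaps f)
    w.cocone w.isColimit).1 (u ≫ w.iso.inv)
  obtain ⟨d, hd⟩ := w.directed {d₁, d₂}
    (lt_of_lt_of_le (((Set.finite_singleton d₂).insert d₁).lt_aleph0) hκ.aleph0_le)
  haveI := leg_mono' hC w d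
  refine ⟨w.F.obj d, w.cocone.ι.app d ≫ w.iso.hom,
    g₁ ≫ w.F.map (homOfLE (hd d₁ (by simp))), g₂ ≫ w.F.map (homOfLE (hd d₂ (by simp))),
    w.gen d, mono_comp _ _, ?_, ?_⟩
  · simp only [Category.assoc]
    rw [show w.F.map (homOfLE (hd d₁ (by simp))) ≫ w.cocone.ι.app d ≫ w.iso.hom
        = w.cocone.ι.app d₁ ≫ w.iso.hom from by rw [← Category.assoc, w.cocone.w],
      ← Category.assoc, hg₁, Category.assoc, Iso.inv_hom_id, Category.comp_id]
  · simp only [Category.assoc]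
    rw [show w.F.map (homOfLE (hd d₂ (by simp))) ≫ w.cocone.ι.app d ≫ w.iso.hom
        = w.cocone.ι.app d₂ ≫ w.iso.hom from by rw [← Category.assoc, w.cocone.w],
      ← Category.assoc, hg₂, Category.assoc, Iso.inv_hom_id, Category.comp_id]

end Aux



theorem statement16 {C : Type u} [Category.{v} C] (κ : Cardinal.{v}) (hκ : κ.IsRegular)
    (hC : LambdaMonoGenerated κ C) {X Y Z : C} (f : X ⟶ Y) (g : Y ⟶ Z)
    (hf : IsLambdaEmbedding κ f) (hg : IsLambdaEmbedding κ g) :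
    IsLambdaEmbedding κ (f ≫ g) := by
  obtain ⟨Sf, ⟨hSfne, hSfl, hSfr⟩, hSfw⟩ := hf
  obtain ⟨Sg, ⟨hSgne, hSgl, hSgr⟩, hSgw⟩ := hg
  let S : Set (MonoSpan X Z) := { σ | IsLambdaGenerated κ σ.U ∧
    ∃ s ∈ Sf, ∃ s' ∈ Sg, ∃ (u : σ.U ⟶ s.U) (v : σ.U ⟶ s'.U),
      u ≫ s.r = v ≫ s'.l ∧ u ≫ s.l = σ.l ∧ v ≫ s'.r = σ.r }
  have wit : ∀ (G : C) (h : G ⟶ X), Mono h → IsLambdaGenerated κ G →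
      ∃ σ ∈ S, ∃ t : G ⟶ σ.U, t ≫ σ.l = h ∧ t ≫ σ.r = h ≫ (f ≫ g) := by
    intro G h hm hGen
    obtain ⟨s, hs, t, ht1, ht2⟩ := hSfw G h hm hGen
    have hmt : Mono t := mono_of_comp_eq' ht1 hm
    have hmhf : Mono (h ≫ f) := by
      rw [← ht2]
      haveI := hmt; haveI := s.monoR
      exact mono_comp _ _
    obtain ⟨s', hs', t', ht'1, ht'2⟩ := hSgw G (h ≫ f) hmhf hGen
    have hmt' : Mono t' := mono_of_comp_eq' ht'1 hmhf
    haveI := hmt'; haveI := s'.monoR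
    refine ⟨⟨G, h, t' ≫ s'.r, hm, mono_comp _ _⟩,
      ⟨hGen, s, hs, s', hs', t, t', by rw [ht2, ht'1], ht1, rfl⟩,
      𝟙 G, Category.id_comp _, ?_⟩
    show 𝟙 G ≫ (t' ≫ s'.r) = h ≫ (f ≫ g)
    rw [Category.id_comp, ht'2, Category.assoc]
  refine ⟨S, ⟨?_, ?_, ?_⟩, wit⟩
  · obtain ⟨G, h, hGen, hm⟩ := exists_gen_mono' hκ hC X
    obtain ⟨σ, hσ, -⟩ := wit G h hm hGen
    exact ⟨σ, hσ⟩
  · -- left extension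
    rintro σ ⟨hUgen, s, hs, s', hs', u, v, huv, hul, hvr⟩ G h hm hGen
    obtain ⟨s₁, hs₁, t₁, m₁, ht₁, hm₁l, hm₁r⟩ := hSfl s hs G h hm hGen
    obtain ⟨V, ι, a, b, hVgen, hιm, ha, hb⟩ := factor_two' hκ hC hGen hUgen t₁ (u ≫ m₁)
    haveI := hιm; haveI := s₁.monoR; haveI := s₁.monoL
    have hmr : Mono (ι ≫ s₁.r) := mono_comp _ _
    obtain ⟨s₂, hs₂, t₂, m₂, ht₂, hm₂l, hm₂r⟩ := hSgl s' hs' V (ι ≫ s₁.r) hmr hVgen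
    have hmt₂ : Mono t₂ := mono_of_comp_eq' ht₂ hmr
    haveI := hmt₂; haveI := s₂.monoR; haveI := s₂.monoL
    have key : b ≫ t₂ = v ≫ m₂ := by
      rw [← cancel_mono s₂.l]
      calc (b ≫ t₂) ≫ s₂.l = b ≫ ι ≫ s₁.r := by rw [Category.assoc, ht₂]
        _ = (u ≫ m₁) ≫ s₁.r := by rw [← Category.assoc, hb]
        _ = u ≫ s.r := by rw [Category.assoc, hm₁r]
        _ = v ≫ s'.l := huv
        _ = (v ≫ m₂) ≫ s₂.l := by rw [Category.assoc, hm₂l]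
    refine ⟨⟨V, ι ≫ s₁.l, t₂ ≫ s₂.r, mono_comp _ _, mono_comp _ _⟩,
      ⟨hVgen, s₁, hs₁, s₂, hs₂, ι, t₂, ht₂.symm, rfl, rfl⟩, a, b, ?_, ?_, ?_⟩
    · show a ≫ (ι ≫ s₁.l) = h
      rw [← Category.assoc, ha, ht₁]
    · show b ≫ (ι ≫ s₁.l) = σ.l
      rw [← Category.assoc, hb, Category.assoc, hm₁l, hul]
    · show b ≫ (t₂ ≫ s₂.r) = σ.r
      rw [← Category.assoc, key, Category.assoc, hm₂r, hvr]
  · -- right extension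
    rintro σ ⟨hUgen, s, hs, s', hs', u, v, huv, hul, hvr⟩ G k hm hGen
    obtain ⟨s₂, hs₂, t₂, m₂, ht₂, hm₂l, hm₂r⟩ := hSgr s' hs' G k hm hGen
    obtain ⟨V, ι, a, b, hVgen, hιm, ha, hb⟩ := factor_two' hκ hC hGen hUgen t₂ (v ≫ m₂)
    haveI := hιm; haveI := s₂.monoL; haveI := s₂.monoR
    have hml : Mono (ι ≫ s₂.l) := mono_comp _ _
    obtain ⟨s₁, hs₁, t₁, m₁, ht₁, hm₁l, hm₁r⟩ := hSfr s hs V (ι ≫ s₂.l) hml hVgen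
    have hmt₁ : Mono t₁ := mono_of_comp_eq' ht₁ hml
    haveI := hmt₁; haveI := s₁.monoL; haveI := s₁.monoR
    have key : b ≫ t₁ = u ≫ m₁ := by
      rw [← cancel_mono s₁.r]
      calc (b ≫ t₁) ≫ s₁.r = b ≫ ι ≫ s₂.l := by rw [Category.assoc, ht₁]
        _ = (v ≫ m₂) ≫ s₂.l := by rw [← Category.assoc, hb]
        _ = v ≫ s'.l := by rw [Category.assoc, hm₂l]
        _ = u ≫ s.r := huv.symm
        _ = (u ≫ m₁) ≫ s₁.r := by rw [Category.assoc, hm₁r]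
    refine ⟨⟨V, t₁ ≫ s₁.l, ι ≫ s₂.r, mono_comp _ _, mono_comp _ _⟩,
      ⟨hVgen, s₁, hs₁, s₂, hs₂, t₁, ι, ht₁, rfl, rfl⟩, a, b, ?_, ?_, ?_⟩
    · show a ≫ (ι ≫ s₂.r) = k
      rw [← Category.assoc, ha, ht₂]
    · show b ≫ (t₁ ≫ s₁.l) = σ.l
      rw [← Category.assoc, key, Category.assoc, hm₁l, hul]
    · show b ≫ (ι ≫ s₂.r) = σ.r
      rw [← Category.assoc, hb, Category.assoc, hm₂r, hvr]
end

section
/- Let A be a λ-mono-generated category and f : X → Y, g : Y → Z morphisms such that g and g∘f are λ-embeddings. Then f is a λ-embedding. -/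
open CategoryTheory CategoryTheory.Limits

universe v u u'

section Aux

variable {C : Type u} [Category.{v} C]

lemma pair_bound {κ : Cardinal.{v}} (hκ : κ.IsRegular) {D : Type v} [Preorder D]
    (hdir : IsLambdaDirected κ D) (d₁ d₂ : D) : ∃ d, d₁ ≤ d ∧ d₂ ≤ d := by
  obtain ⟨d, hd⟩ := hdir {d₁, d₂}
    (lt_of_lt_of_le (((Set.finite_singleton d₂).insert d₁).lt_aleph0) hκ.1)
  exact ⟨d, hd d₁ (by simp), hd d₂ (by simp)⟩

lemma legs_mono {κ : Cardinal.{v}} (hC : LambdaMonoGenerated κ C) {D : Type v} [Preorder D]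
    (hdir : IsLambdaDirected κ D) (F : D ⥤ C)
    (monoMaps : ∀ {d d' : D} (f : d ⟶ d'), Mono (F.map f))
    (c : Cocone F) (hc : IsColimit c) (d : D) : Mono (c.ι.app d) := by
  constructor
  intro T a b hab
  obtain ⟨w⟩ := hC T
  letI := w.instD
  have key : ∀ e : w.D, w.cocone.ι.app e ≫ w.iso.hom ≫ a
      = w.cocone.ι.app e ≫ w.iso.hom ≫ b := by
    intro e
    obtain ⟨d', e', he⟩ := ((w.gen e) D hdir F monoMaps c hc).2 d
      (w.cocone.ι.app e ≫ w.iso.hom ≫ a) (w.cocone.ι.app e ≫ w.iso.hom ≫ b)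
      (by simp only [Category.assoc, hab])
    haveI := monoMaps e'
    exact (cancel_mono (F.map e')).mp he
  have h2 : w.iso.hom ≫ a = w.iso.hom ≫ b := w.isColimit.hom_ext key
  exact (cancel_epi w.iso.hom).mp h2

lemma joint_factor {κ : Cardinal.{v}} (hκ : κ.IsRegular)
    (hC : LambdaMonoGenerated κ C) {V G₁ G₂ : C}
    (h₁ : IsLambdaGenerated κ G₁) (h₂ : IsLambdaGenerated κ G₂)
    (a₁ : G₁ ⟶ V) (a₂ : G₂ ⟶ V) :
    ∃ (W : C) (j : W ⟶ V), Mono j ∧ IsLambdaGenerated κ W ∧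
      ∃ (q₁ : G₁ ⟶ W) (q₂ : G₂ ⟶ W), q₁ ≫ j = a₁ ∧ q₂ ≫ j = a₂ := by
  obtain ⟨w⟩ := hC V
  letI := w.instD
  obtain ⟨d₁, g₁, hg₁⟩ :=
    (h₁ w.D w.directed w.F w.monoMaps w.cocone w.isColimit).1 (a₁ ≫ w.iso.inv)
  obtain ⟨d₂, g₂, hg₂⟩ :=
    (h₂ w.D w.directed w.F w.monoMaps w.cocone w.isColimit).1 (a₂ ≫ w.iso.inv)
  obtain ⟨d, hd₁, hd₂⟩ := pair_bound hκ w.directed d₁ d₂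
  have hmj : Mono (w.cocone.ι.app d ≫ w.iso.hom) := by
    haveI := legs_mono hC w.directed w.F w.monoMaps w.cocone w.isColimit d
    exact mono_comp _ _
  refine ⟨w.F.obj d, w.cocone.ι.app d ≫ w.iso.hom, hmj, w.gen d,
    g₁ ≫ w.F.map (homOfLE hd₁), g₂ ≫ w.F.map (homOfLE hd₂), ?_, ?_⟩
  · simp only [Category.assoc, reassoc_of% w.cocone.w (homOfLE hd₁)]
    rw [← Category.assoc, hg₁, Category.assoc, Iso.inv_hom_id, Category.comp_id]
  · simp only [Category.assoc, reassoc_of% w.cocone.w (homOfLE hd₂)]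
    rw [← Category.assoc, hg₂, Category.assoc, Iso.inv_hom_id, Category.comp_id]

end Aux

theorem statement17 {C : Type u} [Category.{v} C] (κ : Cardinal.{v}) (hκ : κ.IsRegular)
    (hC : LambdaMonoGenerated κ C) {X Y Z : C} (f : X ⟶ Y) (g : Y ⟶ Z)
    (hg : IsLambdaEmbedding κ g) (hgf : IsLambdaEmbedding κ (f ≫ g)) :
    IsLambdaEmbedding κ f := by
  obtain ⟨Sg, hSgD, hSgE⟩ := hg
  obtain ⟨Sgf, hSgfD, hSgfE⟩ := hgf
  -- the candidate set of spans between X and Y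
  have hemb : ∀ (G : C) (x : G ⟶ X), Mono x → IsLambdaGenerated κ G →
      ∃ s : MonoSpan X Y, (IsLambdaGenerated κ s.U ∧
        ∃ u ∈ Sg, ∃ v ∈ Sgf, ∃ (m : s.U ⟶ u.U) (n : s.U ⟶ v.U),
          m ≫ u.l = s.r ∧ n ≫ v.l = s.l ∧ m ≫ u.r = n ≫ v.r) ∧
        ∃ t : G ⟶ s.U, t ≫ s.l = x ∧ t ≫ s.r = x ≫ f := by
    intro G x hx hG
    obtain ⟨v, hv, t, htl, htr⟩ := hSgfE G x hx hG
    haveI : Mono (t ≫ v.l) := by rw [htl]; exact hx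
    haveI ht : Mono t := mono_of_mono t v.l
    haveI := v.monoR
    have hxfg : Mono (x ≫ f ≫ g) := by rw [← htr]; exact mono_comp t v.r
    haveI hxf : Mono (x ≫ f) := by
      haveI : Mono ((x ≫ f) ≫ g) := by rw [Category.assoc]; exact hxfg
      exact mono_of_mono (x ≫ f) g
    obtain ⟨u, hu, t', htl', htr'⟩ := hSgE G (x ≫ f) hxf hG
    refine ⟨⟨G, x, x ≫ f, hx, hxf⟩,
      ⟨hG, u, hu, v, hv, t', t, htl', htl, ?_⟩, 𝟙 G, by simp, by simp⟩
    rw [htr', Category.assoc, ← htr]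
  refine ⟨{ s : MonoSpan X Y | IsLambdaGenerated κ s.U ∧
      ∃ u ∈ Sg, ∃ v ∈ Sgf, ∃ (m : s.U ⟶ u.U) (n : s.U ⟶ v.U),
        m ≫ u.l = s.r ∧ n ≫ v.l = s.l ∧ m ≫ u.r = n ≫ v.r }, ⟨?_, ?_, ?_⟩, ?_⟩
  · -- nonempty
    obtain ⟨w⟩ := hC X
    letI := w.instD
    obtain ⟨d, -⟩ := w.directed ∅ (by rw [Cardinal.mk_emptyCollection]; exact hκ.pos)
    have hx : Mono (w.cocone.ι.app d ≫ w.iso.hom) := by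
      haveI := legs_mono hC w.directed w.F w.monoMaps w.cocone w.isColimit d
      exact mono_comp _ _
    obtain ⟨s, hs, -⟩ := hemb _ _ hx (w.gen d)
    exact ⟨s, hs⟩
  · -- forth: extension along monos into X
    rintro s ⟨hsgen, u, hu, v, hv, m, n, hm, hn, hmn⟩ G x hx hG
    obtain ⟨v', hv', t₁, p, ht₁, hp₁, hp₂⟩ := hSgfD.2.1 v hv G x hx hG
    obtain ⟨W', j, hj, hWgen, q₁, q₂, hq₁, hq₂⟩ := joint_factor hκ hC hG hsgen t₁ (n ≫ p)
    haveI := hj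
    haveI := v'.monoR
    have hjr : Mono (j ≫ v'.r) := mono_comp _ _
    obtain ⟨u', hu', t₂, m₂, ht₂, hm₂l, hm₂r⟩ := hSgD.2.2 u hu W' (j ≫ v'.r) hjr hWgen
    haveI : Mono (t₂ ≫ u'.r) := by rw [ht₂]; exact hjr
    haveI ht₂m : Mono t₂ := mono_of_mono t₂ u'.r
    haveI := v'.monoL
    haveI := u'.monoL
    haveI := u'.monoR
    have hqt : q₂ ≫ t₂ = m ≫ m₂ := by
      rw [← cancel_mono u'.r, Category.assoc, Category.assoc, ht₂, ← Category.assoc, hq₂,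
        Category.assoc, hp₂, ← hmn, hm₂r]
    refine ⟨⟨W', j ≫ v'.l, t₂ ≫ u'.l, mono_comp _ _, mono_comp _ _⟩,
      ⟨hWgen, u', hu', v', hv', t₂, j, rfl, rfl, ht₂⟩, q₁, q₂, ?_, ?_, ?_⟩
    · rw [← Category.assoc, hq₁, ht₁]
    · rw [← Category.assoc, hq₂, Category.assoc, hp₁, hn]
    · show q₂ ≫ t₂ ≫ u'.l = s.r
      rw [← Category.assoc, hqt, Category.assoc, hm₂l, hm]
  · -- back: extension along monos into Y
    rintro s ⟨hsgen, u, hu, v, hv, m, n, hm, hn, hmn⟩ G y hy hG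
    obtain ⟨u₁, hu₁, t₁, p, ht₁, hp₁, hp₂⟩ := hSgD.2.1 u hu G y hy hG
    obtain ⟨W', j, hj, hWgen, q₁, q₂, hq₁, hq₂⟩ := joint_factor hκ hC hG hsgen t₁ (m ≫ p)
    haveI := hj
    haveI := u₁.monoR
    have hjr : Mono (j ≫ u₁.r) := mono_comp _ _
    obtain ⟨v', hv', t₂, m₂, ht₂, hm₂l, hm₂r⟩ := hSgfD.2.2 v hv W' (j ≫ u₁.r) hjr hWgen
    haveI : Mono (t₂ ≫ v'.r) := by rw [ht₂]; exact hjr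
    haveI ht₂m : Mono t₂ := mono_of_mono t₂ v'.r
    haveI := v'.monoL
    haveI := v'.monoR
    haveI := u₁.monoL
    have hqt : q₂ ≫ t₂ = n ≫ m₂ := by
      rw [← cancel_mono v'.r, Category.assoc, Category.assoc, ht₂, ← Category.assoc, hq₂,
        Category.assoc, hp₂, hmn, hm₂r]
    refine ⟨⟨W', t₂ ≫ v'.l, j ≫ u₁.l, mono_comp _ _, mono_comp _ _⟩,
      ⟨hWgen, u₁, hu₁, v', hv', j, t₂, rfl, rfl, ht₂.symm⟩, q₁, q₂, ?_, ?_, ?_⟩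
    · show q₁ ≫ j ≫ u₁.l = y
      rw [← Category.assoc, hq₁, ht₁]
    · show q₂ ≫ t₂ ≫ v'.l = s.l
      rw [← Category.assoc, hqt, Category.assoc, hm₂l, hn]
    · show q₂ ≫ j ≫ u₁.l = s.r
      rw [← Category.assoc, hq₂, Category.assoc, hp₁, hm]
  · -- embedding condition
    intro G x hx hG
    obtain ⟨s, hs, t, h1, h2⟩ := hemb G x hx hG
    exact ⟨s, hs, t, h1, h2⟩
end

section
/- Let A be a λ-mono-generated category and F : A → B a functor preserving monomorphisms and λ-directed colimits of monomorphisms. If f : X → Y is a λ-embedding in A, then F(f) : F(X) → F(Y) is a λ-embedding in B. -/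
open CategoryTheory CategoryTheory.Limits

universe v u u'

/-- In a `κ`-mono-generated category, legs of `κ`-directed colimits of monos are monos. -/
lemma leg_mono_aux {C : Type u} [Category.{v} C] (κ : Cardinal.{v})
    (hC : LambdaMonoGenerated κ C) {D : Type v} [Preorder D] (hD : IsLambdaDirected κ D)
    (G : D ⥤ C) (hm : ∀ {d d' : D} (f : d ⟶ d'), Mono (G.map f))
    (c : Cocone G) (hc : IsColimit c) (d : D) : Mono (c.ι.app d) := by
  constructor
  intro A u v huv
  obtain ⟨w⟩ := hC A
  letI := w.instD
  have key : ∀ e, w.cocone.ι.app e ≫ w.iso.hom ≫ u = w.cocone.ι.app e ≫ w.iso.hom ≫ v := by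
    intro e
    obtain ⟨-, h2⟩ := w.gen e D hD G hm c hc
    obtain ⟨d', e', he⟩ := h2 d (w.cocone.ι.app e ≫ w.iso.hom ≫ u)
      (w.cocone.ι.app e ≫ w.iso.hom ≫ v) (by simp only [Category.assoc, huv])
    haveI := hm e'
    exact (cancel_mono (G.map e')).mp he
  have : w.iso.hom ≫ u = w.iso.hom ≫ v := w.isColimit.hom_ext (by
    intro e
    simpa using key e)
  exact (cancel_epi w.iso.hom).mp this

/-- Any map from a `κ`-generated object of `B` into `F.obj Z` factors through the `F`-image of a
mono from a `κ`-generated object into `Z`. -/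
lemma factor_through_gen {C : Type u} [Category.{v} C] {B : Type u'} [Category.{v} B]
    (κ : Cardinal.{v}) (hC : LambdaMonoGenerated κ C) (F : C ⥤ B)
    (hmono : ∀ {A A' : C} (f : A ⟶ A'), Mono f → Mono (F.map f))
    (hcolim : ∀ (D : Type v) [Preorder D], IsLambdaDirected κ D →
      ∀ (G : D ⥤ C), (∀ {d d' : D} (f : d ⟶ d'), Mono (G.map f)) →
      ∀ (c : Cocone G), IsColimit c → Nonempty (IsColimit (F.mapCocone c)))
    (Z : C) {G : B} (hG : IsLambdaGenerated κ G) (g : G ⟶ F.obj Z) :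
    ∃ (P : C) (k : P ⟶ Z) (g' : G ⟶ F.obj P),
      Mono k ∧ IsLambdaGenerated κ P ∧ g' ≫ F.map k = g := by
  obtain ⟨w⟩ := hC Z
  letI := w.instD
  -- the cocone over `Z` itself
  set c2 : Cocone w.F := w.cocone.extend w.iso.hom with hc2def
  have hc2 : IsColimit c2 :=
    w.isColimit.ofIsoColimit (Cocones.ext w.iso (fun j => rfl))
  obtain ⟨hBc⟩ := hcolim w.D w.directed w.F w.monoMaps w.cocone w.isColimit
  have hBc2 : IsColimit (F.mapCocone c2) :=
    hBc.ofIsoColimit (Cocones.ext (F.mapIso w.iso) (fun j => by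
      show F.map _ ≫ F.map _ = F.map (w.cocone.ι.app j ≫ w.iso.hom)
      rw [F.map_comp]))
  have hmonosB : ∀ {d d' : w.D} (f : d ⟶ d'), Mono ((w.F ⋙ F).map f) :=
    fun f => hmono _ (w.monoMaps f)
  obtain ⟨h1, -⟩ := hG w.D w.directed (w.F ⋙ F) hmonosB (F.mapCocone c2) hBc2
  obtain ⟨d, g', hg'⟩ := h1 g
  refine ⟨w.F.obj d, c2.ι.app d, g', ?_, w.gen d, hg'⟩
  exact leg_mono_aux κ hC w.directed w.F w.monoMaps c2 hc2 d

/-- The image of a mono span under a mono-preserving functor. -/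
def MonoSpan.map {C : Type u} [Category.{v} C] {B : Type u'} [Category.{v} B]
    {X Y : C} (F : C ⥤ B)
    (hmono : ∀ {A A' : C} (f : A ⟶ A'), Mono f → Mono (F.map f))
    (s : MonoSpan X Y) : MonoSpan (F.obj X) (F.obj Y) :=
  ⟨F.obj s.U, F.map s.l, F.map s.r, hmono _ s.monoL, hmono _ s.monoR⟩

theorem statement18 {C : Type u} [Category.{v} C] {B : Type u'} [Category.{v} B]
    (κ : Cardinal.{v}) (hκ : κ.IsRegular) (hC : LambdaMonoGenerated κ C)
    (F : C ⥤ B) (hmono : ∀ {A A' : C} (f : A ⟶ A'), Mono f → Mono (F.map f))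
    (hcolim : ∀ (D : Type v) [Preorder D], IsLambdaDirected κ D →
      ∀ (G : D ⥤ C), (∀ {d d' : D} (f : d ⟶ d'), Mono (G.map f)) →
      ∀ (c : Cocone G), IsColimit c → Nonempty (IsColimit (F.mapCocone c)))
    {X Y : C} (f : X ⟶ Y) (hf : IsLambdaEmbedding κ f) :
    IsLambdaEmbedding κ (F.map f) := by
  obtain ⟨S, ⟨⟨s₀, hs₀⟩, hforth, hback⟩, hfac⟩ := hf
  refine ⟨(MonoSpan.map F hmono) '' S, ⟨⟨_, ⟨s₀, hs₀, rfl⟩⟩, ?_, ?_⟩, ?_⟩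
  · -- forth
    rintro - ⟨s, hs, rfl⟩ G g hg hGgen
    obtain ⟨P, k, g', hk, hPgen, hfac'⟩ :=
      factor_through_gen κ hC F hmono hcolim X hGgen g
    obtain ⟨s', hs', t, m, ht, hml, hmr⟩ := hforth s hs P k hk hPgen
    refine ⟨MonoSpan.map F hmono s', ⟨s', hs', rfl⟩, g' ≫ F.map t, F.map m, ?_, ?_, ?_⟩
    · show (g' ≫ F.map t) ≫ F.map s'.l = g
      rw [Category.assoc, ← F.map_comp, ht, hfac']
    · show F.map m ≫ F.map s'.l = F.map s.l
      rw [← F.map_comp, hml]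
    · show F.map m ≫ F.map s'.r = F.map s.r
      rw [← F.map_comp, hmr]
  · -- back
    rintro - ⟨s, hs, rfl⟩ G g hg hGgen
    obtain ⟨P, k, g', hk, hPgen, hfac'⟩ :=
      factor_through_gen κ hC F hmono hcolim Y hGgen g
    obtain ⟨s', hs', t, m, ht, hml, hmr⟩ := hback s hs P k hk hPgen
    refine ⟨MonoSpan.map F hmono s', ⟨s', hs', rfl⟩, g' ≫ F.map t, F.map m, ?_, ?_, ?_⟩
    · show (g' ≫ F.map t) ≫ F.map s'.r = g
      rw [Category.assoc, ← F.map_comp, ht, hfac']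
    · show F.map m ≫ F.map s'.l = F.map s.l
      rw [← F.map_comp, hml]
    · show F.map m ≫ F.map s'.r = F.map s.r
      rw [← F.map_comp, hmr]
  · -- embedding factorization
    intro G g hg hGgen
    obtain ⟨P, k, g', hk, hPgen, hfac'⟩ :=
      factor_through_gen κ hC F hmono hcolim X hGgen g
    obtain ⟨s, hs, t, htl, htr⟩ := hfac P k hk hPgen
    refine ⟨MonoSpan.map F hmono s, ⟨s, hs, rfl⟩, g' ≫ F.map t, ?_, ?_⟩
    · show (g' ≫ F.map t) ≫ F.map s.l = g
      rw [Category.assoc, ← F.map_comp, htl, hfac']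
    · show (g' ≫ F.map t) ≫ F.map s.r = g ≫ F.map f
      rw [Category.assoc, ← F.map_comp, htr, F.map_comp, ← Category.assoc, hfac']
end
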